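/- arXiv:2401.15693 — 9 statements merged into one kernel-verified Lean document; each statement's English description precedes it below -/
import Mathlib

section
/- Let θ < κ be cardinals and U an ultrafilter over κ. Then U is μ-indecomposable for every cardinal μ ∈ [θ, κ) if and only if for every cardinal μ < κ and every function f : κ → μ there exists H ⊆ μ with |H| < θ such that f⁻¹[H] ∈ U. -/
open Cardinal

/-- An ultrafilter `U` over `I` is `μ`-decomposable if there is `f : I → μ` such that
`f ⁻¹' H ∉ U` for every `H ⊆ μ` of cardinality `< μ`. -/
def MuDecomposable {I : Type} (U : Ultrafilter I) (μ : Cardinal.{0}) : Prop :=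
  ∃ f : I → μ.out, ∀ H : Set μ.out, #H < μ → f ⁻¹' H ∉ U

/-- For cardinals `θ < κ` and an ultrafilter `U` over (a set of size) `κ`: `U` is
`μ`-indecomposable for every cardinal `μ ∈ [θ, κ)` iff for every cardinal `μ < κ` and
every `f : κ → μ` there is `H ⊆ μ` with `|H| < θ` and `f ⁻¹' H ∈ U`. -/
theorem stmt2 {K : Type} (U : Ultrafilter K) (θ κ : Cardinal.{0})
    (hθκ : θ < κ) (hK : #K = κ) :
    (∀ μ : Cardinal.{0}, θ ≤ μ → μ < κ → ¬ MuDecomposable U μ) ↔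
      ∀ μ : Cardinal.{0}, μ < κ → ∀ f : K → μ.out,
        ∃ H : Set μ.out, #H < θ ∧ f ⁻¹' H ∈ U := by
  constructor
  · intro hL μ hμκ f
    classical
    let S : Set Cardinal := {c | ∃ H : Set μ.out, #H = c ∧ f ⁻¹' H ∈ U}
    have hUniv : (μ : Cardinal) ∈ S :=
      ⟨Set.univ, by simp [Cardinal.mk_univ, Cardinal.mk_out], Filter.univ_mem⟩
    have hmem : sInf S ∈ S := csInf_mem ⟨μ, hUniv⟩
    obtain ⟨H, hHcard, hHU⟩ := hmem
    rcases lt_or_ge (sInf S) θ with hlt | hge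
    · exact ⟨H, by rwa [hHcard], hHU⟩
    exfalso
    have hνκ : sInf S < κ := lt_of_le_of_lt (csInf_le' hUniv) hμκ
    have hν0 : sInf S ≠ 0 := by
      intro h0
      rw [h0] at hHcard
      have h1 : IsEmpty H := Cardinal.mk_eq_zero_iff.mp hHcard
      have hHe : H = ∅ := Set.isEmpty_coe_sort.mp h1
      rw [hHe, Set.preimage_empty] at hHU
      exact Ultrafilter.empty_notMem hHU
    haveI : Nonempty (sInf S).out := Cardinal.mk_ne_zero_iff.mp (by rwa [Cardinal.mk_out])
    have hEq : #H = #((sInf S).out) := by rw [hHcard, Cardinal.mk_out]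
    obtain ⟨e⟩ := Cardinal.eq.mp hEq
    let g : K → (sInf S).out := fun x => if h : f x ∈ H then e ⟨f x, h⟩ else Classical.arbitrary _
    have hnd := hL (sInf S) hge hνκ
    rw [MuDecomposable] at hnd
    push_neg at hnd
    obtain ⟨H', hH'lt, hH'U⟩ := hnd g
    have hsub : g ⁻¹' H' ∩ f ⁻¹' H ⊆ f ⁻¹' (Subtype.val '' (e.symm '' H')) := by
      rintro x ⟨hx1, hx2⟩
      have hg : g x = e ⟨f x, hx2⟩ := dif_pos hx2
      refine ⟨e.symm (g x), ⟨g x, hx1, rfl⟩, ?_⟩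
      rw [hg, Equiv.symm_apply_apply]
    have hmemU : f ⁻¹' (Subtype.val '' (e.symm '' H')) ∈ U :=
      Filter.mem_of_superset (Filter.inter_mem hH'U hHU) hsub
    have hcard : #(Subtype.val '' (e.symm '' H') : Set μ.out) < sInf S :=
      lt_of_le_of_lt (le_trans Cardinal.mk_image_le Cardinal.mk_image_le) hH'lt
    exact absurd (csInf_le' (show _ ∈ S from ⟨_, rfl, hmemU⟩)) (not_le.mpr hcard)
  · intro hR μ hθμ hμκ hdec
    obtain ⟨f, hf⟩ := hdec
    obtain ⟨H, hHθ, hHU⟩ := hR μ hμκ f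
    exact hf H (lt_of_lt_of_le hHθ hθμ) hHU
end

section
/- (Kunen–Prikry) If λ is a regular infinite cardinal and an ultrafilter U over a set I is λ⁺-decomposable, then U is λ-decomposable. -/
open Cardinal

/-! Suppose `U` is not `λ`-decomposable, so (`λ` regular) every `g : I → λ` is bounded
mod `U`, and let `F : I → λ⁺` push `U` to a uniform ultrafilter. For each `i` fix an injection
`j i` of the initial segment below `F i` into `λ`; for each `β < λ⁺` the map `i ↦ j i β` is bounded
mod `U` by some `γ β`, and by pigeonhole `γ` is constant, `= γ₀`, on `λ`-many `β = b ν`. For each `i`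
only `< λ` indices `ν` satisfy `b ν < F i ∧ j i (b ν) < γ₀` (they inject into `γ₀`), so they are
bounded by some `k i < λ`. Bounding `k` mod `U` by `ν` and meeting the `U`-large sets attached to
`b ν` yields `i` with `ν < k i < ν`. -/

open Set Filter Order

universe u

namespace Cardinal

theorem IsRegular.exists_gt_of_mk_lt {c : Cardinal.{u}} (hc : c.IsRegular) {s : Set c.ord.ToType}
    (hs : #s < c) : ∃ b, ∀ x ∈ s, x < b := by
  refine not_isCofinal_iff.mp fun hcof => (cof_le hcof).not_gt ?_
  rwa [Ordinal.cof_toType, hc.cof_ord]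

theorem exists_injective_forall_eq_of_mk_lt {α β : Type u} (f : α → β) (h : #β < #α)
    (hα : ℵ₀ ≤ #α) : ∃ a, ∃ g : β → α, Function.Injective g ∧ ∀ y, f (g y) = a := by
  obtain ⟨a, ha⟩ := infinite_pigeonhole_card_lt f h hα
  obtain ⟨e⟩ := (le_def _ _).mp ha.le
  exact ⟨a, fun y => e y, Subtype.val_injective.comp e.injective, fun y => (e y).2⟩

theorem exists_injOn_of_mk_le {α β : Type u} [Nonempty β] {s : Set α} (h : #s ≤ #β) :
    ∃ j : α → β, InjOn j s := by
  classical
  obtain ⟨e⟩ := (le_def _ _).mp h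
  refine ⟨fun x => if hx : x ∈ s then e ⟨x, hx⟩ else Classical.arbitrary β, ?_⟩
  intro x hx y hy hxy
  simpa [hx, hy] using hxy

theorem mk_inter_preimage_Iio_lt {c : Cardinal.{u}} {α : Type u} {s : Set α}
    {f : α → c.ord.ToType} (hf : InjOn f s) (γ : c.ord.ToType) : #(s ∩ f ⁻¹' Iio γ : Set α) < c :=
  calc #(s ∩ f ⁻¹' Iio γ : Set α) = #(f '' (s ∩ f ⁻¹' Iio γ)) :=
        (mk_image_eq_of_injOn _ _ (hf.mono inter_subset_left)).symm
    _ ≤ #(Iio γ) := mk_le_mk_of_subset (image_subset_iff.mpr inter_subset_right)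
    _ < c := by simpa using mk_Iio_lt γ

end Cardinal

section Decomposable

variable {I : Type} {U : Ultrafilter I}

theorem muDecomposable_iff {μ : Cardinal.{0}} {α : Type} (hα : #α = μ) :
    MuDecomposable U μ ↔ ∃ f : I → α, ∀ H : Set α, #H < μ → f ⁻¹' H ∉ U := by
  obtain ⟨e⟩ : Nonempty (μ.out ≃ α) := Cardinal.eq.mp (by rw [mk_out, hα])
  constructor
  · rintro ⟨f, hf⟩
    exact ⟨e ∘ f, fun H hH => hf _ ((mk_preimage_equiv e H).trans_lt hH)⟩
  · rintro ⟨f, hf⟩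
    exact ⟨e.symm ∘ f, fun H hH => hf _ ((mk_preimage_equiv e.symm H).trans_lt hH)⟩

theorem MuDecomposable.exists_eventually_gt {κ : Cardinal.{0}} (h : MuDecomposable U κ)
    (hκ : ℵ₀ ≤ κ) : ∃ F : I → κ.ord.ToType, ∀ b, ∀ᶠ i in (U : Filter I), b < F i := by
  obtain ⟨F, hF⟩ := (muDecomposable_iff (mk_ord_toType κ)).mp h
  have := Cardinal.noMaxOrder hκ
  refine ⟨F, fun b => ?_⟩
  obtain ⟨b', hb'⟩ := exists_gt b
  have hsmall : #(Iic b) < κ :=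
    (mk_le_mk_of_subset (Iic_subset_Iio.mpr hb')).trans_lt (by simpa using mk_Iio_lt b')
  filter_upwards [Ultrafilter.compl_mem_iff_notMem.mpr (hF _ hsmall)] with i hi
  exact not_le.mp hi

theorem exists_eventually_lt_of_not_muDecomposable {c : Cardinal.{0}} (hc : c.IsRegular)
    (h : ¬MuDecomposable U c) (g : I → c.ord.ToType) : ∃ γ, ∀ᶠ i in (U : Filter I), g i < γ := by
  rw [muDecomposable_iff (mk_ord_toType c)] at h
  push Not at h
  obtain ⟨H, hH, hgH⟩ := h g
  obtain ⟨γ, hγ⟩ := hc.exists_gt_of_mk_lt hH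
  exact ⟨γ, mem_of_superset hgH fun i hi => hγ _ hi⟩

theorem muDecomposable_of_eventually_gt {c : Cardinal.{0}} (hc : c.IsRegular) (F : I → (succ c).ord.ToType)
    (hF : ∀ b, ∀ᶠ i in (U : Filter I), b < F i) : MuDecomposable U c := by
  by_contra hnd
  have hbdd := exists_eventually_lt_of_not_muDecomposable hc hnd
  have : Nonempty c.ord.ToType := by
    rw [← mk_ne_zero_iff, mk_ord_toType]; exact hc.ne_zero
  choose j hj using fun i => exists_injOn_of_mk_le (β := c.ord.ToType) (s := Iio (F i))
    (by simpa [← lt_succ_iff] using mk_Iio_lt (F i))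
  choose γ hγ using fun b => hbdd fun i => j i b
  obtain ⟨γ₀, b, hb, hbγ⟩ := exists_injective_forall_eq_of_mk_lt γ
    (by simp) (by simpa using hc.aleph0_le.trans (le_succ c))
  have hT : ∀ i, #(b ⁻¹' Iio (F i) ∩ (j i ∘ b) ⁻¹' Iio γ₀ : Set _) < c := fun i =>
    mk_inter_preimage_Iio_lt ((hj i).comp hb.injOn (mapsTo_preimage _ _)) γ₀
  choose k hk using fun i => hc.exists_gt_of_mk_lt (hT i)
  obtain ⟨ν, hν⟩ := hbdd k
  obtain ⟨i, ⟨hbi, hji⟩, hki⟩ := (((hF (b ν)).and (hγ (b ν))).and hν).exists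
  exact (hk i ν ⟨hbi, hbγ ν ▸ hji⟩).asymm hki

end Decomposable

/-- (Kunen–Prikry) If `λ` is a regular infinite cardinal and an ultrafilter `U` is
`λ⁺`-decomposable, then `U` is `λ`-decomposable. -/
theorem stmt3 {I : Type} (U : Ultrafilter I) (lam : Cardinal.{0}) (hreg : lam.IsRegular)
    (h : MuDecomposable U (Order.succ lam)) : MuDecomposable U lam := by
  obtain ⟨F, hF⟩ := h.exists_eventually_gt (hreg.aleph0_le.trans (le_succ lam))
  exact muDecomposable_of_eventually_gt hreg F hF
end

section
/- If κ = λ⁺ is the successor of a regular cardinal λ > ω, then κ does not carry a uniform indecomposable ultrafilter; that is, there is no uniform ultrafilter over κ that is μ-indecomposable for every cardinal μ ∈ [ℵ₁, κ). -/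
/-!
Well-order `κ = λ⁺` in type `λ⁺` and fix injections `e i` of the initial segment below `i` into
`λ`. Uniformity puts every final segment in `U`, so `λ`-indecomposability applied to
`i ↦ e i j` (and regularity of `λ`) gives `c j < λ` with `e i j < c j` for `U`-almost all `i`.
One value `c` serves `λ⁺` many `j`. Put `μ = (|c| + ℵ₀)⁺ ≤ λ` and take `μ` of these `j`: their
sets `{i | e i j < c}` lie in `U`, yet each `i` lies in at most `|c| < μ` of them because `e i`
is injective. For regular `μ` such a family makes `U` `μ`-decomposable, although `μ ∈ [ℵ₁, λ]`.
-/

open Cardinal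

/-- `U` is uniform: every member has full cardinality. -/
def UniformUF {I : Type} (U : Ultrafilter I) : Prop := ∀ X ∈ U, #X = #I

open Set Order

theorem MuDecomposable.of_mk_eq {I α : Type} {U : Ultrafilter I} {μ : Cardinal.{0}}
    (hα : #α = μ) (f : I → α) (hf : ∀ H : Set α, #H < μ → f ⁻¹' H ∉ U) :
    MuDecomposable U μ := by
  obtain ⟨e⟩ : Nonempty (α ≃ μ.out) := Cardinal.eq.1 (hα.trans (mk_out μ).symm)
  refine ⟨e ∘ f, fun H hH => ?_⟩
  rw [preimage_comp]
  exact hf _ (by rwa [mk_preimage_equiv])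

theorem UniformUF.notMem_of_mk_lt {I : Type} {U : Ultrafilter I} (hU : UniformUF U)
    {X : Set I} (hX : #X < #I) : X ∉ U :=
  fun hXU => hX.ne (hU X hXU)

theorem exists_forall_lt_of_mk_lt_cof {α : Type} [LinearOrder α] {S : Set α}
    (hS : #S < Order.cof α) : ∃ a, ∀ x ∈ S, x < a := by
  by_contra! h
  exact (Order.cof_le h).not_gt hS

theorem Cardinal.IsRegular.exists_forall_lt {μ : Cardinal.{0}} (hμ : μ.IsRegular)
    {S : Set μ.ord.ToType} (hS : #S < μ) : ∃ a, ∀ x ∈ S, x < a :=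
  exists_forall_lt_of_mk_lt_cof (by rwa [Ordinal.cof_toType, hμ.cof_ord])

theorem Cardinal.mk_Iio_ord_toType_lt {c : Cardinal} (i : c.ord.ToType) : #(Iio i) < c := by
  simpa using mk_Iio_lt i

theorem muDecomposable_of_forall_mk_lt {I : Type} {U : Ultrafilter I} {μ : Cardinal.{0}}
    (hμ : μ.IsRegular) (A : μ.ord.ToType → Set I) (hA : ∀ a, A a ∈ U)
    (hpt : ∀ i, #{a | i ∈ A a} < μ) : MuDecomposable U μ := by
  -- `g i` is a strict bound of the indices of the sets containing `i`.
  choose g hg using fun i => hμ.exists_forall_lt (hpt i)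
  refine .of_mk_eq (mk_ord_toType μ) g fun H hH hgH => ?_
  obtain ⟨a, ha⟩ := hμ.exists_forall_lt hH
  obtain ⟨i, hiH, hiA⟩ := U.nonempty_of_mem (U.inter_mem hgH (hA a))
  exact (ha _ hiH).not_gt (hg i a hiA)

section Coding

variable {K : Type} [LinearOrder K] {U : Ultrafilter K} {lam : Cardinal.{0}}
  (e : ∀ i : K, Iio i ↪ lam.ord.ToType)

def codeBelow (j : K) (c : lam.ord.ToType) : Set K :=
  {i | ∃ h : j < i, e i ⟨j, h⟩ < c}

theorem exists_codeBelow_mem (hreg : lam.IsRegular) (hIoi : ∀ j, Ioi j ∈ U)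
    (hind : ¬ MuDecomposable U lam) (j : K) : ∃ c, codeBelow e j c ∈ U := by
  have : Nonempty lam.ord.ToType := by
    rw [← mk_ne_zero_iff, mk_ord_toType]; exact hreg.ne_zero
  let code : K → lam.ord.ToType := fun i =>
    if h : j < i then e i ⟨j, h⟩ else Classical.arbitrary _
  obtain ⟨H, hH, hcodeH⟩ : ∃ H : Set lam.ord.ToType, #H < lam ∧ code ⁻¹' H ∈ U := by
    by_contra! h
    exact hind (.of_mk_eq (mk_ord_toType lam) code h)
  obtain ⟨c, hc⟩ := hreg.exists_forall_lt hH
  refine ⟨c, U.mem_of_superset (U.inter_mem hcodeH (hIoi j)) ?_⟩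
  rintro i ⟨hiH, hji : j < i⟩
  refine ⟨hji, ?_⟩
  simpa [code, hji] using hc _ hiH

theorem muDecomposable_of_codeBelow_mem {c : lam.ord.ToType} {μ : Cardinal.{0}}
    (hμ : μ.IsRegular) (hμc : #(Iio c) < μ) (hE : μ ≤ #{j | codeBelow e j c ∈ U}) :
    MuDecomposable U μ := by
  obtain ⟨β⟩ : Nonempty (μ.ord.ToType ↪ {j | codeBelow e j c ∈ U}) := by
    rwa [← le_def, mk_ord_toType]
  refine muDecomposable_of_forall_mk_lt hμ (fun a => codeBelow e (β a) c) (fun a => (β a).2)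
    fun i => ?_
  let code (a : {a | i ∈ codeBelow e (β a) c}) : Iio c := ⟨e i ⟨β a, a.2.1⟩, a.2.2⟩
  refine (mk_le_of_injective (f := code) ?_).trans_lt hμc
  rintro ⟨a₁, h₁⟩ ⟨a₂, h₂⟩ h
  have hβ := congrArg Subtype.val ((e i).injective (Subtype.ext_iff.1 h))
  exact Subtype.ext (β.injective (Subtype.ext hβ))

end Coding

theorem UniformUF.Ioi_mem {K : Type} [LinearOrder K] {U : Ultrafilter K} (hU : UniformUF U)
    {lam : Cardinal.{0}} (hlam : ℵ₀ ≤ lam) (hK : lam < #K) {j : K} (hj : #(Iio j) ≤ lam) :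
    Ioi j ∈ U := by
  rw [← compl_Iic, Ultrafilter.compl_mem_iff_notMem]
  refine hU.notMem_of_mk_lt (lt_of_le_of_lt ?_ hK)
  calc #(Iic j) = #(insert j (Iio j) : Set K) := by rw [Iio_insert]
    _ ≤ #(Iio j) + 1 := mk_insert_le
    _ ≤ lam + 1 := by gcongr
    _ = lam := add_one_eq hlam

theorem exists_muDecomposable_of_not_muDecomposable {K : Type} [LinearOrder K]
    {U : Ultrafilter K} {lam : Cardinal.{0}} (hreg : lam.IsRegular) (hlam : ℵ₀ < lam)
    (hK : lam < #K) (hIio : ∀ i : K, #(Iio i) ≤ lam) (hIoi : ∀ j, Ioi j ∈ U)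
    (hind : ¬ MuDecomposable U lam) :
    ∃ μ, ℵ₁ ≤ μ ∧ μ ≤ lam ∧ MuDecomposable U μ := by
  have e (i : K) : Iio i ↪ lam.ord.ToType :=
    Classical.choice <| by rw [← le_def, mk_ord_toType]; exact hIio i
  choose c hc using exists_codeBelow_mem e hreg hIoi hind
  obtain ⟨c₀, hc₀⟩ := infinite_pigeonhole_card_lt c (by rwa [mk_ord_toType]) (hlam.le.trans hK.le)
  rw [mk_ord_toType] at hc₀
  have hμlam : succ (max #(Iio c₀) ℵ₀) ≤ lam :=
    succ_le_of_lt (max_lt (mk_Iio_ord_toType_lt c₀) hlam)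
  refine ⟨_, succ_aleph0 ▸ succ_le_succ (le_max_right _ _), hμlam,
    muDecomposable_of_codeBelow_mem e (isRegular_succ (le_max_right _ _))
      (lt_succ_of_le (le_max_left _ _)) ?_⟩
  exact hμlam.trans (hc₀.le.trans (mk_le_mk_of_subset fun j (hj : c j = c₀) => hj ▸ hc j))

/-- If `κ = λ⁺` is the successor of a regular cardinal `λ > ω`, then `κ` carries no
uniform ultrafilter that is `μ`-indecomposable for every cardinal `μ ∈ [ℵ₁, κ)`. -/
theorem stmt4 {K : Type} (lam : Cardinal.{0}) (hreg : lam.IsRegular) (hlam : ℵ₀ < lam)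
    (hK : #K = Order.succ lam) :
    ¬ ∃ U : Ultrafilter K, UniformUF U ∧
        ∀ μ : Cardinal.{0}, Cardinal.aleph 1 ≤ μ → μ < Order.succ lam →
          ¬ MuDecomposable U μ := by
  rintro ⟨U, hU, hind⟩
  have hlamK : lam < #K := hK ▸ lt_succ lam
  obtain ⟨e⟩ : Nonempty (K ≃ (succ lam).ord.ToType) := Cardinal.eq.1 (by rw [mk_ord_toType, hK])
  let : LinearOrder K := LinearOrder.lift' e e.injective
  have hIio (i : K) : #(Iio i) ≤ lam := by
    rw [← lt_succ_iff, show Iio i = e ⁻¹' Iio (e i) from rfl, mk_preimage_equiv]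
    exact mk_Iio_ord_toType_lt _
  obtain ⟨μ, hμ₁, hμlam, hμ⟩ := exists_muDecomposable_of_not_muDecomposable hreg hlam hlamK hIio
    (fun j => hU.Ioi_mem hlam.le hlamK (hIio j))
    (hind lam (succ_aleph0 ▸ succ_le_of_lt hlam) (lt_succ lam))
  exact hind μ hμ₁ (hμlam.trans_lt (lt_succ lam)) hμ
end

section
/- Suppose θ < κ are infinite regular cardinals and ⊟ⁱⁿᵈ(κ, θ) holds (the weakening of indexed square described in the context). Then there exists a coloring c : [κ]² → θ that witnesses U(κ,2,θ,2), is subadditive, and is closed on points of cofinality ≥ θ. In particular, κ is not weakly compact. -/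
open Set Cardinal

/-- `ordAcc A` is the set of accumulation points of `A`. -/
def ordAcc (A : Set Ordinal.{0}) : Set Ordinal.{0} :=
  {α | 0 < α ∧ sSup (A ∩ Set.Iio α) = α}

/-- `C` is a club (closed unbounded set) in `β`. -/
def IsClubIn (C : Set Ordinal.{0}) (β : Ordinal.{0}) : Prop :=
  C ⊆ Set.Iio β ∧ (∀ α < β, α ∈ ordAcc C → α ∈ C) ∧ ∀ α < β, ∃ ξ ∈ C, α ≤ ξ

/-- The principle `⊟ⁱⁿᵈ(κ,θ)`, witnessed by the matrix
`⟨C α i | α ∈ acc(κ), iF α ≤ i < θ⟩`. -/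
def IndSqE (κ θ : Cardinal.{0})
    (C : Ordinal.{0} → Ordinal.{0} → Set Ordinal.{0}) (iF : Ordinal.{0} → Ordinal.{0}) :
    Prop :=
  -- (1) increasing sequences of clubs, catching all accumulation points
  (∀ α, α < κ.ord → Order.IsSuccLimit α →
      iF α < θ.ord ∧
      (∀ i j, iF α ≤ i → i ≤ j → j < θ.ord → C α i ⊆ C α j) ∧
      (∀ i, iF α ≤ i → i < θ.ord → IsClubIn (C α i) α) ∧
      (∀ β, β < α → (Order.IsSuccLimit β ↔ ∃ i, iF α ≤ i ∧ i < θ.ord ∧ β ∈ ordAcc (C α i)))) ∧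
  -- (2) full coherence at accumulation points of cofinality ≥ θ
  (∀ α, α < κ.ord → Order.IsSuccLimit α → ∀ i, iF α ≤ i → i < θ.ord →
      ∀ β ∈ ordAcc (C α i), θ ≤ β.cof → iF β ≤ i ∧ C β i = C α i ∩ Set.Iio β) ∧
  -- (3) eventual coherence everywhere
  (∀ β α, β < α → α < κ.ord → Order.IsSuccLimit β → Order.IsSuccLimit α →
      ∃ j, iF β ≤ j ∧ iF α ≤ j ∧ j < θ.ord ∧
        ∀ i, j ≤ i → i < θ.ord → C β i = C α i ∩ Set.Iio β) ∧
  -- (4) nontriviality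
  (∀ D : Set Ordinal.{0}, IsClubIn D κ.ord →
      ∃ α, α < κ.ord ∧ α ∈ ordAcc D ∧ θ ≤ α.cof ∧
        ∀ i, i < θ.ord → D ∩ Set.Iio α ≠ C α i)


/-!
For limit ordinals `x < y < κ`, colour `{x, y}` by the least index from which `C x i` and
`C y i ∩ x` agree (clause (3)), and colour an arbitrary pair through the least limits above its
points. Composing coherences gives subadditivity. Closedness comes from clause (2): if cofinally
many `δ < α` cohere with `b` from `j` on, then `α` is an accumulation point of `C b j`. If the
colours on a set of size `κ` were all below `j`, the clubs `C y j` would thread into a club of `κ`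
that clause (4) forbids.

If `κ` were weakly compact, colour `x < y` by comparing `⟨c ε x | ε⟩` and `⟨c ε y | ε⟩`
lexicographically. On a homogeneous set the restrictions to `ε ≤ α` are monotone and, `κ` being
a strong limit, take fewer than `κ` values, so they are eventually constant. Thinning out and a
pigeonhole then give a set of size `κ` on which `c` is constant, contradicting unboundedness.
-/

noncomputable def limitCeil (α : Ordinal.{0}) : Ordinal.{0} :=
  sInf {β | α ≤ β ∧ Order.IsSuccLimit β}

lemma limitCeil_spec (α : Ordinal.{0}) : α ≤ limitCeil α ∧ Order.IsSuccLimit (limitCeil α) :=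
  csInf_mem (s := {β | α ≤ β ∧ Order.IsSuccLimit β})
    ⟨α + Ordinal.omega0, le_self_add, Ordinal.isSuccLimit_add _ Ordinal.isSuccLimit_omega0⟩

lemma le_limitCeil (α : Ordinal.{0}) : α ≤ limitCeil α := (limitCeil_spec α).1

lemma isSuccLimit_limitCeil (α : Ordinal.{0}) : Order.IsSuccLimit (limitCeil α) :=
  (limitCeil_spec α).2

lemma limitCeil_le {α β : Ordinal.{0}} (h : α ≤ β) (hβ : Order.IsSuccLimit β) :
    limitCeil α ≤ β :=
  csInf_le (OrderBot.bddBelow _) ⟨h, hβ⟩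

lemma limitCeil_mono : Monotone limitCeil := fun _ β h =>
  limitCeil_le (h.trans (le_limitCeil β)) (isSuccLimit_limitCeil β)

lemma limitCeil_eq_self {α : Ordinal.{0}} (h : Order.IsSuccLimit α) : limitCeil α = α :=
  (limitCeil_le le_rfl h).antisymm (le_limitCeil α)

lemma limitCeil_lt_ord {κ : Cardinal.{0}} (hκ : ℵ₀ < κ) {α : Ordinal.{0}} (h : α < κ.ord) :
    limitCeil α < κ.ord := by
  have hω : Order.IsSuccLimit (α + Ordinal.omega0) :=
    Ordinal.isSuccLimit_add α Ordinal.isSuccLimit_omega0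
  refine (limitCeil_le le_self_add hω).trans_lt ?_
  rw [lt_ord] at h ⊢
  rw [Ordinal.card_add, Ordinal.card_omega0]
  exact add_lt_of_lt hκ.le h hκ

lemma mem_ordAcc_iff {A : Set Ordinal.{0}} {α : Ordinal.{0}} :
    α ∈ ordAcc A ↔ 0 < α ∧ ∀ η < α, ∃ ξ ∈ A, η < ξ ∧ ξ < α := by
  constructor
  · rintro ⟨hpos, hsup⟩
    refine ⟨hpos, fun η hη => ?_⟩
    have hne : (A ∩ Iio α).Nonempty := by
      by_contra h
      rw [not_nonempty_iff_eq_empty.mp h, csSup_empty] at hsup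
      exact hpos.ne hsup
    obtain ⟨ξ, ⟨hξA, hξα⟩, hηξ⟩ := exists_lt_of_lt_csSup hne (hsup ▸ hη)
    exact ⟨ξ, hξA, hηξ, hξα⟩
  · rintro ⟨hpos, hub⟩
    obtain ⟨ξ, hξA, -, hξα⟩ := hub 0 hpos
    refine ⟨hpos, csSup_eq_of_forall_le_of_forall_lt_exists_gt ⟨ξ, hξA, hξα⟩
      (fun ξ hξ => hξ.2.le) fun η hη => ?_⟩
    obtain ⟨ξ, hξA, hηξ, hξα⟩ := hub η hη
    exact ⟨ξ, ⟨hξA, hξα⟩, hηξ⟩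

lemma ordAcc_mono {A B : Set Ordinal.{0}} (h : A ⊆ B) : ordAcc A ⊆ ordAcc B := by
  intro α hα
  rw [mem_ordAcc_iff] at hα ⊢
  exact ⟨hα.1, fun η hη => (hα.2 η hη).imp fun ξ ⟨hξA, hξ⟩ => ⟨h hξA, hξ⟩⟩

lemma mem_ordAcc_inter_Iio {A : Set Ordinal.{0}} {α β : Ordinal.{0}} (hαβ : α ≤ β) :
    α ∈ ordAcc (A ∩ Iio β) ↔ α ∈ ordAcc A := by
  simp only [mem_ordAcc_iff, mem_inter_iff, mem_Iio, and_assoc]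
  refine and_congr_right fun _ => forall₂_congr fun η _ => exists_congr fun ξ => ?_
  exact ⟨fun ⟨hξA, _, hηξ, hξα⟩ => ⟨hξA, hηξ, hξα⟩,
    fun ⟨hξA, hηξ, hξα⟩ => ⟨hξA, hξα.trans_le hαβ, hηξ, hξα⟩⟩

lemma IsClubIn.mem_ordAcc {E : Set Ordinal.{0}} {δ : Ordinal.{0}} (hE : IsClubIn E δ)
    (hδ : Order.IsSuccLimit δ) : δ ∈ ordAcc E := by
  refine mem_ordAcc_iff.mpr ⟨hδ.bot_lt, fun η hη => ?_⟩
  obtain ⟨ξ, hξE, hηξ⟩ := hE.2.2 (Order.succ η) (hδ.succ_lt hη)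
  exact ⟨ξ, hξE, Order.succ_le_iff.mp hηξ, hE.1 hξE⟩

section Threading

variable {δ : Ordinal.{0}} {L : Set Ordinal.{0}} {E : Ordinal.{0} → Set Ordinal.{0}}

lemma biUnion_inter_Iio_of_coherent (hE : ∀ y ∈ L, E y ⊆ Iio y)
    (hcoh : ∀ x ∈ L, ∀ y ∈ L, x < y → E x = E y ∩ Iio x) : ∀ y ∈ L,
    (⋃ z ∈ L, E z) ∩ Iio y = E y := by
  intro y hy
  refine Subset.antisymm ?_ fun ξ hξ => ⟨mem_biUnion hy hξ, hE y hy hξ⟩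
  rintro ξ ⟨hξ, hξy⟩
  obtain ⟨z, hz, hξz⟩ := mem_iUnion₂.mp hξ
  rcases lt_trichotomy z y with hzy | rfl | hyz
  · exact (hcoh z hz y hy hzy ▸ hξz).1
  · exact hξz
  · exact hcoh y hy z hz hyz ▸ ⟨hξz, hξy⟩

lemma isClubIn_biUnion_of_coherent (hL : L ⊆ Iio δ) (hLub : ∀ γ < δ, ∃ y ∈ L, γ < y)
    (hE : ∀ y ∈ L, IsClubIn (E y) y) (hcoh : ∀ x ∈ L, ∀ y ∈ L, x < y → E x = E y ∩ Iio x) :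
    IsClubIn (⋃ z ∈ L, E z) δ := by
  have hinter := biUnion_inter_Iio_of_coherent (fun y hy => (hE y hy).1) hcoh
  refine ⟨iUnion₂_subset fun y hy => (hE y hy).1.trans (Iio_subset_Iio (hL hy).le), ?_, ?_⟩
  · intro γ hγ hγacc
    obtain ⟨y, hy, hγy⟩ := hLub γ hγ
    rw [← mem_ordAcc_inter_Iio hγy.le, hinter y hy] at hγacc
    exact mem_biUnion hy ((hE y hy).2.1 γ hγy hγacc)
  · intro γ hγ
    obtain ⟨y, hy, hγy⟩ := hLub γ hγ
    obtain ⟨ξ, hξ, hγξ⟩ := (hE y hy).2.2 γ hγy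
    exact ⟨ξ, mem_biUnion hy hξ, hγξ⟩

end Threading

lemma mk_Iio_lt_of_lt_ord {κ : Cardinal.{0}} {γ : Ordinal.{0}} (hγ : γ < κ.ord) :
    #(Iio γ) < Cardinal.lift.{1} κ := by
  rw [mk_Iio_ordinal]
  exact lift_lt.mpr (lt_ord.mp hγ)

lemma exists_mem_gt_of_lift_le_mk {κ : Cardinal.{0}} (hκ : ℵ₀ ≤ κ) {H : Set Ordinal.{0}}
    (hH : Cardinal.lift.{1} κ ≤ #H) {γ : Ordinal.{0}} (hγ : γ < κ.ord) : ∃ x ∈ H, γ < x := by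
  by_contra! hle
  have hHγ : H ⊆ Iio (Order.succ γ) := fun x hx => Order.lt_succ_iff.mpr (hle x hx)
  exact (hH.trans (mk_le_mk_of_subset hHγ)).not_gt
    (mk_Iio_lt_of_lt_ord ((isSuccLimit_ord hκ).succ_lt hγ))

section Coloring

variable {κ θ : Cardinal.{0}} {C : Ordinal.{0} → Ordinal.{0} → Set Ordinal.{0}}
  {iF : Ordinal.{0} → Ordinal.{0}}

def CoheresFrom (θ : Cardinal.{0}) (C : Ordinal.{0} → Ordinal.{0} → Set Ordinal.{0})
    (iF : Ordinal.{0} → Ordinal.{0}) (x y j : Ordinal.{0}) : Prop :=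
  iF x ≤ j ∧ iF y ≤ j ∧ j < θ.ord ∧ ∀ i, j ≤ i → i < θ.ord → C x i = C y i ∩ Iio x

noncomputable def cohIndex (θ : Cardinal.{0}) (C : Ordinal.{0} → Ordinal.{0} → Set Ordinal.{0})
    (iF : Ordinal.{0} → Ordinal.{0}) (x y : Ordinal.{0}) : Ordinal.{0} :=
  if x = y then 0 else sInf {j | CoheresFrom θ C iF x y j}

noncomputable def sqColoring (θ : Cardinal.{0}) (C : Ordinal.{0} → Ordinal.{0} → Set Ordinal.{0})
    (iF : Ordinal.{0} → Ordinal.{0}) (α β : Ordinal.{0}) : Ordinal.{0} :=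
  cohIndex θ C iF (limitCeil α) (limitCeil β)

lemma CoheresFrom.mono {x y j j' : Ordinal.{0}} (h : CoheresFrom θ C iF x y j) (hjj' : j ≤ j')
    (hj' : j' < θ.ord) : CoheresFrom θ C iF x y j' :=
  ⟨h.1.trans hjj', h.2.1.trans hjj', hj', fun i hi => h.2.2.2 i (hjj'.trans hi)⟩

lemma cohIndex_le {x y j : Ordinal.{0}} (hxy : x ≠ y) (h : CoheresFrom θ C iF x y j) :
    cohIndex θ C iF x y ≤ j := by
  rw [cohIndex, if_neg hxy]
  exact csInf_le (OrderBot.bddBelow _) h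

lemma coheresFrom_cohIndex (hsq : IndSqE κ θ C iF) {x y : Ordinal.{0}} (hxy : x < y)
    (hy : y < κ.ord) (hxl : Order.IsSuccLimit x) (hyl : Order.IsSuccLimit y) :
    CoheresFrom θ C iF x y (cohIndex θ C iF x y) := by
  rw [cohIndex, if_neg hxy.ne]
  exact csInf_mem (hsq.2.2.1 x y hxy hy hxl hyl)

lemma coheresFrom_of_cohIndex_le (hsq : IndSqE κ θ C iF) {x y j : Ordinal.{0}} (hxy : x < y)
    (hy : y < κ.ord) (hxl : Order.IsSuccLimit x) (hyl : Order.IsSuccLimit y)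
    (hj : cohIndex θ C iF x y ≤ j) (hjθ : j < θ.ord) : CoheresFrom θ C iF x y j :=
  (coheresFrom_cohIndex hsq hxy hy hxl hyl).mono hj hjθ

lemma cohIndex_lt (hsq : IndSqE κ θ C iF) {x y : Ordinal.{0}} (hxy : x ≤ y) (hy : y < κ.ord)
    (hxl : Order.IsSuccLimit x) (hyl : Order.IsSuccLimit y) : cohIndex θ C iF x y < θ.ord := by
  rcases hxy.lt_or_eq with hxy | rfl
  · exact (coheresFrom_cohIndex hsq hxy hy hxl hyl).2.2.1
  · rw [cohIndex, if_pos rfl]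
    exact zero_le.trans_lt (hsq.1 x hy hxl).1

lemma cohIndex_le_max_of_lt_of_lt (hsq : IndSqE κ θ C iF) {x y z : Ordinal.{0}} (hxy : x < y)
    (hyz : y < z) (hz : z < κ.ord) (hx : Order.IsSuccLimit x) (hy : Order.IsSuccLimit y)
    (hzl : Order.IsSuccLimit z) :
    cohIndex θ C iF x z ≤ max (cohIndex θ C iF x y) (cohIndex θ C iF y z) ∧
      cohIndex θ C iF x y ≤ max (cohIndex θ C iF x z) (cohIndex θ C iF y z) := by
  obtain ⟨hxy₁, -, hxy₃, hxy₄⟩ := coheresFrom_cohIndex hsq hxy (hyz.trans hz) hx hy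
  obtain ⟨hxz₁, -, hxz₃, hxz₄⟩ := coheresFrom_cohIndex hsq (hxy.trans hyz) hz hx hzl
  obtain ⟨hyz₁, hyz₂, hyz₃, hyz₄⟩ := coheresFrom_cohIndex hsq hyz hz hy hzl
  have hIio : Iio x ∩ Iio y = Iio x := inter_eq_left.mpr (Iio_subset_Iio hxy.le)
  constructor
  · refine cohIndex_le (hxy.trans hyz).ne ⟨hxy₁.trans (le_max_left ..),
      hyz₂.trans (le_max_right ..), max_lt hxy₃ hyz₃, fun i hi hiθ => ?_⟩
    rw [hxy₄ i (le_of_max_le_left hi) hiθ, hyz₄ i (le_of_max_le_right hi) hiθ, inter_assoc,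
      inter_comm (Iio y), hIio]
  · refine cohIndex_le hxy.ne ⟨hxz₁.trans (le_max_left ..),
      hyz₁.trans (le_max_right ..), max_lt hxz₃ hyz₃, fun i hi hiθ => ?_⟩
    rw [hxz₄ i (le_of_max_le_left hi) hiθ, hyz₄ i (le_of_max_le_right hi) hiθ, inter_assoc,
      inter_comm (Iio y), hIio]

lemma cohIndex_le_max (hsq : IndSqE κ θ C iF) {x y z : Ordinal.{0}} (hxy : x ≤ y)
    (hyz : y ≤ z) (hz : z < κ.ord) (hx : Order.IsSuccLimit x) (hy : Order.IsSuccLimit y)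
    (hzl : Order.IsSuccLimit z) :
    cohIndex θ C iF x z ≤ max (cohIndex θ C iF x y) (cohIndex θ C iF y z) ∧
      cohIndex θ C iF x y ≤ max (cohIndex θ C iF x z) (cohIndex θ C iF y z) := by
  rcases hxy.lt_or_eq with hxy | rfl
  · rcases hyz.lt_or_eq with hyz | rfl
    · exact cohIndex_le_max_of_lt_of_lt hsq hxy hyz hz hx hy hzl
    · exact ⟨le_max_left .., le_max_left ..⟩
  · simp [cohIndex]

lemma sqColoring_lt (hsq : IndSqE κ θ C iF) (hκ : ℵ₀ < κ) {α β : Ordinal.{0}} (hαβ : α ≤ β)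
    (hβ : β < κ.ord) : sqColoring θ C iF α β < θ.ord :=
  cohIndex_lt hsq (limitCeil_mono hαβ) (limitCeil_lt_ord hκ hβ) (isSuccLimit_limitCeil α)
    (isSuccLimit_limitCeil β)

lemma sqColoring_le_max (hsq : IndSqE κ θ C iF) (hκ : ℵ₀ < κ) {α β γ : Ordinal.{0}}
    (hαβ : α ≤ β) (hβγ : β ≤ γ) (hγ : γ < κ.ord) :
    sqColoring θ C iF α γ ≤ max (sqColoring θ C iF α β) (sqColoring θ C iF β γ) ∧
      sqColoring θ C iF α β ≤ max (sqColoring θ C iF α γ) (sqColoring θ C iF β γ) :=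
  cohIndex_le_max hsq (limitCeil_mono hαβ) (limitCeil_mono hβγ) (limitCeil_lt_ord hκ hγ)
    (isSuccLimit_limitCeil α) (isSuccLimit_limitCeil β) (isSuccLimit_limitCeil γ)

lemma cohIndex_le_of_frequently (hsq : IndSqE κ θ C iF) {α b j : Ordinal.{0}} (hb : b < κ.ord)
    (hbl : Order.IsSuccLimit b) (hα : Order.IsSuccLimit α) (hαb : α < b) (hcof : θ ≤ α.cof)
    (hj : j < θ.ord)
    (h : ∀ η < α, ∃ δ, η < δ ∧ δ < α ∧ Order.IsSuccLimit δ ∧ cohIndex θ C iF δ b ≤ j) :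
    cohIndex θ C iF α b ≤ j := by
  have hcoh : ∀ η < α, ∃ δ, η < δ ∧ δ < α ∧ Order.IsSuccLimit δ ∧ CoheresFrom θ C iF δ b j := by
    intro η hη
    obtain ⟨δ, hηδ, hδα, hδl, hδ⟩ := h η hη
    exact ⟨δ, hηδ, hδα, hδl, coheresFrom_of_cohIndex_le hsq (hδα.trans hαb) hb hδl hbl hδ hj⟩
  obtain ⟨-, -, -, -, -, hiFb, -⟩ := hcoh 0 hα.bot_lt
  have hacc : α ∈ ordAcc (C b j) := by
    refine mem_ordAcc_iff.mpr ⟨hα.bot_lt, fun η hη => ?_⟩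
    obtain ⟨δ, hηδ, hδα, hδl, hiFδ, -, -, hδb⟩ := hcoh η hη
    have hδacc := ((hsq.1 δ ((hδα.trans hαb).trans hb) hδl).2.2.1 j hiFδ hj).mem_ordAcc hδl
    rw [hδb j le_rfl hj, mem_ordAcc_inter_Iio le_rfl, mem_ordAcc_iff] at hδacc
    obtain ⟨ξ, hξ, hηξ, hξδ⟩ := hδacc.2 η hηδ
    exact ⟨ξ, hξ, hηξ, hξδ.trans hδα⟩
  refine cohIndex_le hαb.ne ⟨(hsq.2.1 b hb hbl j hiFb hj α hacc hcof).1, hiFb, hj,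
    fun i hji hiθ => ?_⟩
  have hacc_i := ordAcc_mono ((hsq.1 b hb hbl).2.1 j i hiFb hji hiθ) hacc
  exact (hsq.2.1 b hb hbl i (hiFb.trans hji) hiθ α hacc_i hcof).2

lemma sqColoring_le_of_frequently (hsq : IndSqE κ θ C iF) (hθ : ℵ₀ ≤ θ) (hκ : ℵ₀ < κ)
    {α β j : Ordinal.{0}} (hαβ : α < β) (hβ : β < κ.ord) (hcof : θ ≤ α.cof)
    (h : ∀ η < α, ∃ ε, η ≤ ε ∧ ε < α ∧ sqColoring θ C iF ε β ≤ j) :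
    sqColoring θ C iF α β ≤ j := by
  have hα : Order.IsSuccLimit α :=
    Ordinal.one_lt_cof_iff.mp (one_lt_aleph0.trans_le (hθ.trans hcof))
  have hcol : sqColoring θ C iF α β = cohIndex θ C iF α (limitCeil β) := by
    rw [sqColoring, limitCeil_eq_self hα]
  by_contra! hjlt
  have hj : j < θ.ord := hjlt.trans (sqColoring_lt hsq hκ hαβ.le hβ)
  refine hjlt.not_ge (hcol ▸ cohIndex_le_of_frequently hsq (limitCeil_lt_ord hκ hβ)
    (isSuccLimit_limitCeil β) hα (hαβ.trans_le (le_limitCeil β)) hcof hj fun η hη => ?_)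
  obtain ⟨ε, hηε, hεα, hε⟩ := h (Order.succ η) (hα.succ_lt hη)
  have hceil : limitCeil ε < α := by
    refine (limitCeil_le hεα.le hα).lt_of_ne fun heq => hjlt.not_ge ?_
    rwa [hcol, ← heq]
  exact ⟨limitCeil ε, (Order.succ_le_iff.mp hηε).trans_le (le_limitCeil ε), hceil,
    isSuccLimit_limitCeil ε, hε⟩

lemma not_forall_coheresFrom (hsq : IndSqE κ θ C iF) {L : Set Ordinal.{0}} {j : Ordinal.{0}}
    (hL : ∀ y ∈ L, y < κ.ord ∧ Order.IsSuccLimit y) (hLub : ∀ γ < κ.ord, ∃ y ∈ L, γ < y)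
    (hj : j < θ.ord) : ¬ ∀ x ∈ L, ∀ y ∈ L, x < y → CoheresFrom θ C iF x y j := by
  intro hcoh
  have hiF : ∀ y ∈ L, iF y ≤ j := fun y hy => by
    obtain ⟨z, hz, hyz⟩ := hLub y (hL y hy).1
    exact (hcoh y hy z hz hyz).1
  have hclub : ∀ y ∈ L, IsClubIn (C y j) y := fun y hy =>
    (hsq.1 y (hL y hy).1 (hL y hy).2).2.2.1 j (hiF y hy) hj
  have hcohj : ∀ x ∈ L, ∀ y ∈ L, x < y → C x j = C y j ∩ Iio x := fun x hx y hy hxy =>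
    (hcoh x hx y hy hxy).2.2.2 j le_rfl hj
  have hinter := biUnion_inter_Iio_of_coherent (E := fun y => C y j)
    (fun y hy => (hclub y hy).1) hcohj
  obtain ⟨α, hακ, hαacc, hαcof, hne⟩ := hsq.2.2.2 _
    (isClubIn_biUnion_of_coherent (E := fun y => C y j) (fun y hy => (hL y hy).1) hLub hclub
      hcohj)
  obtain ⟨y, hy, hαy⟩ := hLub α hακ
  rw [← mem_ordAcc_inter_Iio hαy.le, hinter y hy] at hαacc
  refine hne j hj ?_
  rw [(hsq.2.1 y (hL y hy).1 (hL y hy).2 j (hiF y hy) hj α hαacc hαcof).2, ← hinter y hy,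
    inter_assoc, Iio_inter_Iio, min_eq_right hαy.le]

lemma sqColoring_unbounded (hsq : IndSqE κ θ C iF) (hκ : ℵ₀ < κ) {H : Set Ordinal.{0}}
    (hH : H ⊆ Iio κ.ord) (hHcard : Cardinal.lift.{1} κ ≤ #H) {j : Ordinal.{0}} (hj : j < θ.ord) :
    ∃ α ∈ H, ∃ β ∈ H, α < β ∧ j ≤ sqColoring θ C iF α β := by
  by_contra! hsmall
  refine not_forall_coheresFrom hsq (L := limitCeil '' H) ?_ (fun γ hγ => ?_) hj ?_
  · rintro _ ⟨x, hx, rfl⟩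
    exact ⟨limitCeil_lt_ord hκ (hH hx), isSuccLimit_limitCeil x⟩
  · obtain ⟨x, hx, hγx⟩ := exists_mem_gt_of_lift_le_mk hκ.le hHcard hγ
    exact ⟨limitCeil x, mem_image_of_mem _ hx, hγx.trans_le (le_limitCeil x)⟩
  · rintro _ ⟨a, ha, rfl⟩ _ ⟨b, hb, rfl⟩ hab
    exact coheresFrom_of_cohIndex_le hsq hab (limitCeil_lt_ord hκ (hH hb))
      (isSuccLimit_limitCeil a) (isSuccLimit_limitCeil b)
      (hsmall a ha b hb (limitCeil_mono.reflect_lt hab)).le hj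

end Coloring

theorem Pi.toLex_restrict_Iic_le {ι β : Type*} [LinearOrder ι] [WellFoundedLT ι] [PartialOrder β]
    {f g : ι → β} (h : toLex f ≤ toLex g) (a : ι) :
    toLex (fun i : Iic a => f i) ≤ toLex (fun i : Iic a => g i) := by
  rcases h.lt_or_eq with ⟨i, hi, hlt⟩ | h
  · by_cases hia : i ≤ a
    · exact le_of_lt ⟨⟨i, hia⟩, fun j hj => hi j hj, hlt⟩
    · exact le_of_eq (congrArg toLex (funext fun j => hi j (j.2.trans_lt (not_le.mp hia))))
  · rw [toLex_inj.mp h]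

section Partition

variable {κ θ : Cardinal.{0}}

-- the partition relation `κ → (κ)²₂`
def HasPartitionProperty (κ : Cardinal.{0}) : Prop :=
  ∀ d : Ordinal.{0} → Ordinal.{0} → Bool,
    ∃ H : Set Ordinal.{0}, H ⊆ Iio κ.ord ∧ #H = Cardinal.lift.{1} κ ∧
      ∃ b : Bool, ∀ α ∈ H, ∀ β ∈ H, α < β → d α β = b

noncomputable def lexColoring (c : Ordinal.{0} → Ordinal.{0} → Ordinal.{0}) (x y : Ordinal.{0}) :
    Bool :=
  decide (toLex (c · x) ≤ toLex (c · y))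

lemma lift_le_mk_inter_Ioi (hκ : ℵ₀ ≤ κ) {H : Set Ordinal.{0}} (hH : Cardinal.lift.{1} κ ≤ #H)
    {α : Ordinal.{0}} (hα : α < κ.ord) : Cardinal.lift.{1} κ ≤ #(H ∩ Ioi α : Set _) := by
  by_contra! hlt
  have hsplit : H ⊆ (H ∩ Ioi α) ∪ Iio (Order.succ α) := fun x hx =>
    (lt_or_ge α x).imp (⟨hx, ·⟩) Order.lt_succ_of_le
  exact (hH.trans ((mk_le_mk_of_subset hsplit).trans (mk_union_le _ _))).not_gt
    (add_lt_of_lt (aleph0_le_lift.mpr hκ) hlt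
      (mk_Iio_lt_of_lt_ord ((isSuccLimit_ord hκ).succ_lt hα)))

lemma exists_subset_lift_le_mk_eq (hκ : κ.IsRegular) {S : Set Ordinal.{0}}
    (hS : Cardinal.lift.{1} κ ≤ #S) {β : Type 1} (f : Ordinal.{0} → β)
    (hf : #(f '' S) < Cardinal.lift.{1} κ) :
    ∃ T ⊆ S, Cardinal.lift.{1} κ ≤ #T ∧ ∃ b, ∀ x ∈ T, f x = b := by
  obtain ⟨b, T, hTS, hT, hTb⟩ := infinite_pigeonhole_set
    (fun x : S => (⟨f x, mem_image_of_mem f x.2⟩ : f '' S)) _ hS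
    (aleph0_le_lift.mpr hκ.aleph0_le) (by rwa [hκ.lift.cof_ord])
  exact ⟨T, hTS, hT, b, fun x hx => congrArg Subtype.val (hTb hx)⟩

lemma exists_forall_ge_eq_of_monotoneOn_or_antitoneOn (hκ : κ.IsRegular) {S : Set Ordinal.{0}}
    (hS : S ⊆ Iio κ.ord) (hScard : Cardinal.lift.{1} κ ≤ #S) {β : Type 1} [PartialOrder β]
    {v : Ordinal.{0} → β} (hv : MonotoneOn v S ∨ AntitoneOn v S)
    (hsmall : #(v '' S) < Cardinal.lift.{1} κ) :
    ∃ x₀ ∈ S, ∀ y ∈ S, x₀ ≤ y → v y = v x₀ := by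
  obtain ⟨T, hTS, hT, b, hTb⟩ := exists_subset_lift_le_mk_eq hκ hScard v hsmall
  obtain ⟨x₀, hx₀, -⟩ := exists_mem_gt_of_lift_le_mk hκ.aleph0_le hT hκ.ord_pos
  refine ⟨x₀, hTS hx₀, fun y hy hx₀y => ?_⟩
  obtain ⟨z, hz, hyz⟩ := exists_mem_gt_of_lift_le_mk hκ.aleph0_le hT (hS hy)
  have hzx₀ : v z = v x₀ := (hTb z hz).trans (hTb x₀ hx₀).symm
  rcases hv with hv | hv
  · exact le_antisymm (hzx₀ ▸ hv hy (hTS hz) hyz.le) (hv (hTS hx₀) hy hx₀y)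
  · exact le_antisymm (hv (hTS hx₀) hy hx₀y) (hzx₀ ▸ hv hy (hTS hz) hyz.le)

lemma monotoneOn_or_antitoneOn_of_lexColoring {c : Ordinal.{0} → Ordinal.{0} → Ordinal.{0}}
    {H : Set Ordinal.{0}} {b : Bool} (hH : ∀ x ∈ H, ∀ y ∈ H, x < y → lexColoring c x y = b)
    (α : Ordinal.{0}) :
    MonotoneOn (fun x => toLex fun ε : Iic α => c ε x) H ∨
      AntitoneOn (fun x => toLex fun ε : Iic α => c ε x) H := by
  cases b
  · refine Or.inr fun x hx y hy hxy => ?_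
    rcases hxy.eq_or_lt with rfl | hxy
    · rfl
    have hyx : ¬ toLex (c · x) ≤ toLex (c · y) := by
      simpa only [lexColoring, decide_eq_false_iff_not] using hH x hx y hy hxy
    exact Pi.toLex_restrict_Iic_le (le_of_not_ge hyx) α
  · refine Or.inl fun x hx y hy hxy => ?_
    rcases hxy.eq_or_lt with rfl | hxy
    · rfl
    have hxy : toLex (c · x) ≤ toLex (c · y) := by
      simpa only [lexColoring, decide_eq_true_iff] using hH x hx y hy hxy
    exact Pi.toLex_restrict_Iic_le hxy α

lemma mk_image_toLex_restrict_lt (hsl : κ.IsStrongLimit) (hθκ : θ < κ) {α : Ordinal.{0}}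
    (hα : α < κ.ord) {c : Ordinal.{0} → Ordinal.{0} → Ordinal.{0}} {S : Set Ordinal.{0}}
    (hS : ∀ x ∈ S, ∀ ε ≤ α, c ε x < θ.ord) :
    #((fun x => toLex fun ε : Iic α => c ε x) '' S) < Cardinal.lift.{1} κ := by
  have hsub : (fun x => toLex fun ε : Iic α => c ε x) '' S ⊆
      range fun g : Iic α → Iio θ.ord => toLex fun ε => (g ε : Ordinal.{0}) := by
    rintro _ ⟨x, hx, rfl⟩
    exact ⟨fun ε => ⟨c ε x, hS x hx ε ε.2⟩, rfl⟩
  have hμ : (Order.succ α).card < κ := lt_ord.mp ((isSuccLimit_ord hsl.aleph0_le).succ_lt hα)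
  have hpow : θ ^ (Order.succ α).card < κ :=
    calc θ ^ (Order.succ α).card ≤ (2 ^ θ) ^ (Order.succ α).card :=
          power_le_power_right (cantor θ).le
      _ = 2 ^ (θ * (Order.succ α).card) := by rw [← power_mul]
      _ < κ := hsl.isStrongPrelimit (mul_lt_of_lt hsl.aleph0_le hθκ hμ)
  calc _ ≤ #(Iic α → Iio θ.ord) := (mk_le_mk_of_subset hsub).trans mk_range_le
    _ = Cardinal.lift.{1} (θ ^ (Order.succ α).card) := by
      rw [← power_def, mk_Iio_ordinal, ← Order.Iio_succ, mk_Iio_ordinal, card_ord, lift_power]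
    _ < Cardinal.lift.{1} κ := lift_lt.mpr hpow

lemma exists_forall_ge_eq_of_lexColoring (hκ : κ.IsRegular) (hsl : κ.IsStrongLimit)
    (hθκ : θ < κ) {c : Ordinal.{0} → Ordinal.{0} → Ordinal.{0}}
    (hc : ∀ α β, α < β → β < κ.ord → c α β < θ.ord) {H : Set Ordinal.{0}}
    (hH : H ⊆ Iio κ.ord) (hHcard : Cardinal.lift.{1} κ ≤ #H) {b : Bool}
    (hhom : ∀ x ∈ H, ∀ y ∈ H, x < y → lexColoring c x y = b) {α : Ordinal.{0}}
    (hα : α < κ.ord) : ∃ x₀ ∈ H, α < x₀ ∧ ∀ y ∈ H, x₀ ≤ y → c α y = c α x₀ := by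
  obtain ⟨x₀, ⟨hx₀H, hαx₀⟩, hx₀⟩ := exists_forall_ge_eq_of_monotoneOn_or_antitoneOn hκ
    (inter_subset_left.trans hH) (lift_le_mk_inter_Ioi hκ.aleph0_le hHcard hα)
    ((monotoneOn_or_antitoneOn_of_lexColoring hhom α).imp (·.mono inter_subset_left)
      (·.mono inter_subset_left))
    (mk_image_toLex_restrict_lt hsl hθκ hα fun x hx ε hε => hc ε x (hε.trans_lt hx.2) (hH hx.1))
  exact ⟨x₀, hx₀H, hαx₀, fun y hy hx₀y =>
    congrArg (fun f : Lex (Iic α → Ordinal.{0}) => ofLex f ⟨α, mem_Iic.mpr le_rfl⟩)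
      (hx₀ y ⟨hy, hαx₀.trans_le hx₀y⟩ hx₀y)⟩

lemma exists_forall_lt_of_mk_lt (hκ : κ.IsRegular) {T : Set Ordinal.{0}} (hT : T ⊆ Iio κ.ord)
    (hTcard : #T < Cardinal.lift.{1} κ) : ∃ γ < κ.ord, ∀ s ∈ T, s < γ := by
  refine ⟨sSup ((· + 1) '' T), Ordinal.sSup_add_one_lt_of_lt_cof ?_ hT, fun s hs => ?_⟩
  · rwa [lift_ord, hκ.lift.cof_ord]
  · have hbdd : BddAbove ((· + 1) '' T) := ⟨κ.ord, by
      rintro _ ⟨s, hs, rfl⟩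
      exact Order.add_one_le_of_lt (hT hs)⟩
    exact (Order.lt_add_one_iff.mpr le_rfl).trans_le (le_csSup hbdd (mem_image_of_mem _ hs))

lemma exists_subset_forall_lt_imp_lt (hκ : κ.IsRegular) {H : Set Ordinal.{0}}
    (hH : H ⊆ Iio κ.ord) (hHcard : Cardinal.lift.{1} κ ≤ #H) (t : Ordinal.{0} → Ordinal.{0})
    (ht : ∀ x ∈ H, t x < κ.ord) :
    ∃ B ⊆ H, #B = Cardinal.lift.{1} κ ∧ ∀ p ∈ B, ∀ q ∈ B, p < q → t p < q := by
  let F : Ordinal.{0} → Ordinal.{0} := Ordinal.lt_wf.fix fun δ F =>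
    sInf {x ∈ H | ∀ η (h : η < δ), max (F η h) (t (F η h)) < x}
  have hF (δ : Ordinal.{0}) : F δ = sInf {x ∈ H | ∀ η < δ, max (F η) (t (F η)) < x} :=
    Ordinal.lt_wf.fix_eq _ δ
  have hFH : ∀ δ < κ.ord, F δ ∈ H ∧ ∀ η < δ, max (F η) (t (F η)) < F δ := by
    intro δ
    induction δ using WellFoundedLT.induction with | _ δ IH => ?_
    intro hδ
    obtain ⟨γ, hγ, hγT⟩ := exists_forall_lt_of_mk_lt hκ
      (T := (fun η => max (F η) (t (F η))) '' Iio δ)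
      (by
        rintro _ ⟨η, hη, rfl⟩
        have hFη := (IH η hη (hη.trans hδ)).1
        exact max_lt (hH hFη) (ht _ hFη))
      (mk_image_le.trans_lt (mk_Iio_lt_of_lt_ord hδ))
    obtain ⟨x, hxH, hγx⟩ := exists_mem_gt_of_lift_le_mk hκ.aleph0_le hHcard hγ
    rw [hF δ]
    exact csInf_mem (s := {x ∈ H | ∀ η < δ, max (F η) (t (F η)) < x})
      ⟨x, hxH, fun η hη => (hγT _ (mem_image_of_mem _ hη)).trans hγx⟩
  have hFmono : StrictMonoOn F (Iio κ.ord) := fun η _ δ hδ hηδ =>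
    (le_max_left ..).trans_lt ((hFH δ hδ).2 η hηδ)
  refine ⟨F '' Iio κ.ord, image_subset_iff.mpr fun δ hδ => (hFH δ hδ).1, ?_, ?_⟩
  · rw [mk_image_eq_of_injOn _ _ hFmono.injOn, mk_Iio_ordinal, card_ord]
  · rintro _ ⟨η, hη, rfl⟩ _ ⟨δ, hδ, rfl⟩ hFηδ
    exact (le_max_right ..).trans_lt ((hFH δ hδ).2 η ((hFmono.lt_iff_lt hη hδ).mp hFηδ))

theorem HasPartitionProperty.exists_homogeneous (hpart : HasPartitionProperty κ)
    (hκ : κ.IsRegular) (hsl : κ.IsStrongLimit) (hθκ : θ < κ)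
    {c : Ordinal.{0} → Ordinal.{0} → Ordinal.{0}}
    (hc : ∀ α β, α < β → β < κ.ord → c α β < θ.ord) :
    ∃ A ⊆ Iio κ.ord, #A = Cardinal.lift.{1} κ ∧
      ∃ a < θ.ord, ∀ α ∈ A, ∀ β ∈ A, α < β → c α β = a := by
  obtain ⟨H, hH, hHcard, b, hhom⟩ := hpart (lexColoring c)
  choose! t ht using fun α (hα : α ∈ H) =>
    exists_forall_ge_eq_of_lexColoring hκ hsl hθκ hc hH hHcard.ge hhom (hH hα)
  obtain ⟨B, hBH, hBcard, hB⟩ :=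
    exists_subset_forall_lt_imp_lt hκ hH hHcard.ge t fun x hx => hH (ht x hx).1
  have hcB : ∀ p ∈ B, c p (t p) < θ.ord := fun p hp =>
    hc p (t p) (ht p (hBH hp)).2.1 (hH (ht p (hBH hp)).1)
  have himage : #((fun p => c p (t p)) '' B) < Cardinal.lift.{1} κ :=
    (mk_le_mk_of_subset (image_subset_iff.mpr hcB)).trans_lt (mk_Iio_lt_of_lt_ord
      (ord_lt_ord.mpr hθκ))
  obtain ⟨A, hAB, hAcard, a, hA⟩ := exists_subset_lift_le_mk_eq hκ hBcard.ge _ himage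
  have hAκ : A ⊆ Iio κ.ord := hAB.trans (hBH.trans hH)
  obtain ⟨p, hp, -⟩ := exists_mem_gt_of_lift_le_mk hκ.aleph0_le hAcard hκ.ord_pos
  refine ⟨A, hAκ, le_antisymm ((mk_le_mk_of_subset hAκ).trans_eq (by
    rw [mk_Iio_ordinal, card_ord])) hAcard, a, hA p hp ▸ hcB p (hAB hp),
    fun α hα β hβ hαβ => ?_⟩
  exact ((ht α (hBH (hAB hα))).2.2 β (hBH (hAB hβ)) (hB α (hAB hα) β (hAB hβ) hαβ).le).trans
    (hA α hα)

end Partition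

/-- If `θ < κ` are infinite regular cardinals and `⊟ⁱⁿᵈ(κ,θ)` holds, then there is a
coloring `c : [κ]² → θ` witnessing `U(κ,2,θ,2)` that is subadditive and closed on
points of cofinality `≥ θ`; in particular `κ` is not weakly compact. -/
theorem stmt7 (κ θ : Cardinal.{0}) (hθ : θ.IsRegular) (hκ : κ.IsRegular) (hθκ : θ < κ)
    (C : Ordinal.{0} → Ordinal.{0} → Set Ordinal.{0}) (iF : Ordinal.{0} → Ordinal.{0})
    (hsq : IndSqE κ θ C iF) :
    (∃ c : Ordinal.{0} → Ordinal.{0} → Ordinal.{0},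
      (∀ α β, α < β → β < κ.ord → c α β < θ.ord) ∧
      -- c witnesses U(κ,2,θ,2)
      (∀ H : Set Ordinal.{0}, H ⊆ Set.Iio κ.ord → #H = Cardinal.lift.{1} κ →
        ∀ j, j < θ.ord → ∃ α ∈ H, ∃ β ∈ H, α < β ∧ j ≤ c α β) ∧
      -- c is subadditive
      (∀ α β γ, α < β → β < γ → γ < κ.ord →
        c α γ ≤ max (c α β) (c β γ) ∧ c α β ≤ max (c α γ) (c β γ)) ∧
      -- c is closed on points of cofinality ≥ θ
      (∀ α β j, α < β → β < κ.ord → θ ≤ α.cof →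
        (∀ η < α, ∃ ε, η ≤ ε ∧ ε < α ∧ c ε β ≤ j) → c α β ≤ j)) ∧
    -- in particular, κ is not weakly compact
    ¬ (κ.IsInaccessible ∧ ∀ d : Ordinal.{0} → Ordinal.{0} → Bool,
        ∃ H : Set Ordinal.{0}, H ⊆ Set.Iio κ.ord ∧ #H = Cardinal.lift.{1} κ ∧
          ∃ b : Bool, ∀ α ∈ H, ∀ β ∈ H, α < β → d α β = b) := by
  have hκω : ℵ₀ < κ := hθ.aleph0_le.trans_lt hθκ
  have hlt : ∀ α β, α < β → β < κ.ord → sqColoring θ C iF α β < θ.ord :=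
    fun α β hαβ hβ => sqColoring_lt hsq hκω hαβ.le hβ
  have hU : ∀ H : Set Ordinal.{0}, H ⊆ Iio κ.ord → #H = Cardinal.lift.{1} κ →
      ∀ j, j < θ.ord → ∃ α ∈ H, ∃ β ∈ H, α < β ∧ j ≤ sqColoring θ C iF α β :=
    fun H hH hHcard j hj => sqColoring_unbounded hsq hκω hH hHcard.ge hj
  refine ⟨⟨sqColoring θ C iF, hlt, hU,
    fun α β γ hαβ hβγ hγ => sqColoring_le_max hsq hκω hαβ.le hβγ.le hγ,
    fun α β j hαβ hβ hcof => sqColoring_le_of_frequently hsq hθ.aleph0_le hκω hαβ hβ hcof⟩, ?_⟩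
  rintro ⟨hinacc, hpart⟩
  obtain ⟨A, hA, hAcard, a, ha, hhom⟩ :=
    HasPartitionProperty.exists_homogeneous hpart hκ hinacc.isStrongLimit hθκ hlt
  obtain ⟨α, hα, β, hβ, hαβ, hle⟩ :=
    hU A hA hAcard (Order.succ a) ((isSuccLimit_ord hθ.aleph0_le).succ_lt ha)
  exact (Order.lt_succ a).not_ge (hhom α hα β hβ hαβ ▸ hle)
end

section
/- Suppose θ < κ are uncountable cardinals with κ regular, every narrow κ-system of width < θ has a cofinal branch (NSP(θ,κ)), and κ carries an ultrafilter U that is μ-indecomposable for every cardinal μ ∈ [θ, κ) and uniform. Then κ has the tree property: every tree of height κ all of whose levels have size < κ has a cofinal branch. -/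
open Set Cardinal

/-- A tree, presented by its strict order and a level function. -/
structure OrdTree where
  carrier : Type
  lt : carrier → carrier → Prop
  level : carrier → Ordinal.{0}

/-- `T` is a tree of height `lam`: transitive irreflexive, levels respect the order,
each node has a unique predecessor on every lower level, predecessors are comparable,
and every level `< lam` (and no other) is occupied. -/
def OrdTree.IsOfHeight (T : OrdTree) (lam : Ordinal.{0}) : Prop :=
  (∀ x y z, T.lt x y → T.lt y z → T.lt x z) ∧
  (∀ x, ¬ T.lt x x) ∧
  (∀ x y, T.lt x y → T.level x < T.level y) ∧
  (∀ y, ∀ α < T.level y, ∃! x, T.lt x y ∧ T.level x = α) ∧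
  (∀ x y z, T.lt x z → T.lt y z → (x = y ∨ T.lt x y ∨ T.lt y x)) ∧
  (∀ x, T.level x < lam) ∧ (∀ α < lam, ∃ x, T.level x = α)

/-- All levels of `T` below `lam` have size `< κ`. -/
def OrdTree.SmallLevels (T : OrdTree) (lam : Ordinal.{0}) (κ : Cardinal.{0}) : Prop :=
  ∀ α < lam, #{x : T.carrier // T.level x = α} < κ

/-- `B` is a cofinal branch of `T` (with respect to height `lam`). -/
def OrdTree.CofinalBranch (T : OrdTree) (lam : Ordinal.{0}) (B : Set T.carrier) : Prop :=
  (∀ x ∈ B, ∀ y ∈ B, x = y ∨ T.lt x y ∨ T.lt y x) ∧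
  ∀ α < lam, ∃ x ∈ B, α ≤ T.level x

/-- Data of a `κ`-system: an index set of levels `I`, widths `θFun`, and a family of
binary relations on pairs `(α, β)` with `α ∈ I`, `β < θFun α`. -/
structure SysData where
  I : Set Ordinal.{0}
  θFun : Ordinal.{0} → Cardinal.{0}
  ι : Type
  rel : ι → Ordinal.{0} × Ordinal.{0} → Ordinal.{0} × Ordinal.{0} → Prop

/-- The underlying set of nodes of the system. -/
def SysData.dom (S : SysData) : Set (Ordinal.{0} × Ordinal.{0}) :=
  {p | p.1 ∈ S.I ∧ p.2 < (S.θFun p.1).ord}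

/-- `S` is a `κ`-system. -/
def IsKSystem (κ : Cardinal.{0}) (S : SysData) : Prop :=
  S.I ⊆ Set.Iio κ.ord ∧ (∀ η < κ.ord, ∃ α ∈ S.I, η ≤ α) ∧
  (∀ α ∈ S.I, 0 < S.θFun α ∧ S.θFun α < κ) ∧
  Nonempty S.ι ∧ #S.ι < κ ∧
  (∀ r : S.ι, ∀ a b c, S.rel r a b → S.rel r b c → S.rel r a c) ∧
  (∀ r : S.ι, ∀ a b c, a ∈ S.dom → b ∈ S.dom → c ∈ S.dom →
    S.rel r a c → S.rel r b c → (a = b ∨ S.rel r a b ∨ S.rel r b a)) ∧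
  (∀ r : S.ι, ∀ a b, a ∈ S.dom → b ∈ S.dom → S.rel r a b → a.1 < b.1) ∧
  (∀ α₀ ∈ S.I, ∀ α₁ ∈ S.I, α₀ < α₁ →
    ∃ β₀ β₁, ∃ r : S.ι, β₀ < (S.θFun α₀).ord ∧ β₁ < (S.θFun α₁).ord ∧
      S.rel r (α₀, β₀) (α₁, β₁))

/-- The width of `S` is `< θ`. -/
def WidthLt (S : SysData) (θ : Cardinal.{0}) : Prop :=
  ∃ ν < θ, #S.ι ≤ ν ∧ ∀ α ∈ S.I, S.θFun α ≤ ν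

/-- `S` has a cofinal branch. -/
def HasCofinalSysBranch (κ : Cardinal.{0}) (S : SysData) : Prop :=
  ∃ (r : S.ι) (B : Set (Ordinal.{0} × Ordinal.{0})), B ⊆ S.dom ∧
    (∀ a ∈ B, ∀ b ∈ B, a = b ∨ S.rel r a b ∨ S.rel r b a) ∧
    ∀ η < κ.ord, ∃ a ∈ B, η ≤ a.1

/-!
Choose nodes `x k` (`k ∈ K`) whose levels tend to `κ` along `U`. For a level `α < κ`, the map
`k ↦` (predecessor of `x k` on level `α`) lands in a set of size `< κ`; applying
indecomposability repeatedly shrinks it to a set `H α` of fewer than `θ` nodes that still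
catches `U`-almost every `k`. Any `α₀ < α₁` are linked: some `k` is caught at both levels, and
its two predecessors are comparable. By regularity of `κ`, cofinally many `H α` have one common
size `ν < θ`; enumerating them by `ν` gives a narrow `κ`-system of width `< θ` ordered by the
tree order, and a cofinal branch of it is a cofinal branch of the tree.
-/

section Ultrafilter

variable {K : Type} {U : Ultrafilter K}

theorem UniformUF.compl_mem_of_mk_lt (hU : UniformUF U) {s : Set K} (hs : #s < #K) : sᶜ ∈ U :=
  Ultrafilter.compl_mem_iff_notMem.mpr fun h => (hU s h).not_lt hs

theorem UniformUF.exists_lt_ord_eventually_gt (hU : UniformUF U) {κ : Cardinal.{0}}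
    (hK : #K = κ) (hκ : ℵ₀ ≤ κ) :
    ∃ lv : K → Ordinal.{0}, (∀ k, lv k < κ.ord) ∧
      ∀ η < κ.ord, ∀ᶠ k in (U : Filter K), η < lv k := by
  obtain ⟨e⟩ := Cardinal.eq.mp (show #K = #κ.ord.ToType by rw [mk_toType, card_ord, hK])
  refine ⟨fun k => (e k).toOrd, fun k => (e k).toOrd.2, fun η hη => ?_⟩
  have hcompl : {k | η < (e k).toOrd.1}ᶜ = e ⁻¹' Iic (Ordinal.ToType.mk ⟨η, hη⟩) := by
    ext k
    show ¬ (⟨η, hη⟩ : Iio κ.ord) < (e k).toOrd ↔ _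
    exact not_lt.trans Ordinal.ToType.mk.symm_apply_le
  rw [Filter.Eventually, ← compl_compl {k | _}]
  refine hU.compl_mem_of_mk_lt ?_
  rw [hcompl, mk_preimage_of_injective_of_subset_range _ _ e.injective (by simp), mk_congr e]
  exact mk_Iic_lt _ (by rw [mk_toType, card_ord, Ordinal.type_toType])
    (by rwa [mk_toType, card_ord])

theorem exists_subset_mk_lt_preimage_mem_of_not_muDecomposable {A : Type} {s : Set A}
    (h : ¬ MuDecomposable U #s) {f : K → A} (hf : f ⁻¹' s ∈ U) :
    ∃ t ⊆ s, #t < #s ∧ f ⁻¹' t ∈ U := by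
  classical
  obtain ⟨k₀, hk₀⟩ := U.nonempty_of_mem hf
  let g : K → s := fun k => if hk : f k ∈ s then ⟨f k, hk⟩ else ⟨f k₀, hk₀⟩
  simp only [MuDecomposable, not_exists, not_forall, not_not] at h
  obtain ⟨t, ht, hgt⟩ := h (outMkEquiv.symm ∘ g)
  refine ⟨Subtype.val '' (outMkEquiv '' t), image_subset_iff.2 fun y _ => y.2, ?_, ?_⟩
  · rwa [mk_image_eq Subtype.val_injective, mk_image_eq outMkEquiv.injective]
  · filter_upwards [hf, hgt] with k hk hkt
    exact ⟨g k, ⟨_, hkt, by simp⟩, congrArg Subtype.val (dif_pos hk)⟩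

theorem exists_subset_mk_lt_preimage_mem {θ κ : Cardinal.{0}}
    (hind : ∀ μ, θ ≤ μ → μ < κ → ¬ MuDecomposable U μ) {A : Type} (f : K → A) {s : Set A}
    (hsκ : #s < κ) (hs : f ⁻¹' s ∈ U) : ∃ t ⊆ s, #t < θ ∧ f ⁻¹' t ∈ U := by
  induction hμ : #s using WellFoundedLT.induction generalizing s with
  | ind μ ih =>
  by_cases hsθ : #s < θ
  · exact ⟨s, subset_rfl, hsθ, hs⟩
  obtain ⟨t, hts, htlt, ht⟩ :=
    exists_subset_mk_lt_preimage_mem_of_not_muDecomposable (hind _ (not_lt.1 hsθ) hsκ) hs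
  obtain ⟨r, hrt, hrθ, hr⟩ := ih _ (hμ ▸ htlt) (htlt.trans hsκ) ht rfl
  exact ⟨r, hrt.trans hts, hrθ, hr⟩

end Ultrafilter

theorem Cardinal.IsRegular.exists_cofinal_fiber {κ : Cardinal.{0}} (hκ : κ.IsRegular)
    {o : Ordinal.{0}} (ho : o.card < κ) (g : Ordinal.{0} → Ordinal.{0})
    (hg : ∀ α < κ.ord, g α < o) :
    ∃ ξ < o, ∀ η < κ.ord, ∃ α ∈ {α | α < κ.ord ∧ g α = ξ}, η ≤ α := by
  by_contra! h
  choose b hbκ hb using h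
  set η := ⨆ i : o.ToType, b i.toOrd i.toOrd.2
  have hη : η < κ.ord :=
    Ordinal.iSup_lt_of_lt_cof (by rwa [mk_toType, hκ.cof_ord]) fun i => hbκ _ _
  have hbη : b (g η) (hg η hη) ≤ η := by
    simpa using Ordinal.le_iSup (fun i : o.ToType => b i.toOrd i.toOrd.2)
      (Ordinal.ToType.mk ⟨g η, hg η hη⟩)
  exact (hb _ _ η ⟨hη, rfl⟩).not_ge hbη

theorem exists_bijOn_Iio_ord {X : Type} [Nonempty X] (s : Set X) :
    ∃ e : Ordinal.{0} → X, BijOn e (Iio (#s).ord) s := by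
  classical
  obtain ⟨φ⟩ := Cardinal.eq.mp (show #(#s).ord.ToType = #s by rw [mk_toType, card_ord])
  let ψ : Iio (#s).ord ≃ s := Ordinal.ToType.mk.toEquiv.trans φ
  refine ⟨fun β => if hβ : β ∈ Iio (#s).ord then ψ ⟨β, hβ⟩ else Classical.arbitrary X, ?_, ?_, ?_⟩
  · intro β hβ
    simp only [dif_pos hβ]
    exact (ψ ⟨β, hβ⟩).2
  · intro β hβ β' hβ' h
    simp only [dif_pos hβ, dif_pos hβ'] at h
    exact congrArg Subtype.val (ψ.injective (Subtype.ext h))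
  · intro y hy
    refine ⟨ψ.symm ⟨y, hy⟩, (ψ.symm ⟨y, hy⟩).2, ?_⟩
    simp only [dif_pos (ψ.symm ⟨y, hy⟩).2, Subtype.coe_eta, Equiv.apply_symm_apply]

namespace OrdTree

variable {T : OrdTree} {lam : Ordinal.{0}}

/-- The predecessor of `x` on level `α`; junk value `x` unless `α < T.level x`. -/
noncomputable def predAt (T : OrdTree) (x : T.carrier) (α : Ordinal.{0}) : T.carrier :=
  open Classical in
  if h : ∃ y, T.lt y x ∧ T.level y = α then h.choose else x

theorem predAt_spec (hT : T.IsOfHeight lam) {x : T.carrier} {α : Ordinal.{0}}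
    (h : α < T.level x) : T.lt (T.predAt x α) x ∧ T.level (T.predAt x α) = α := by
  have hex := (hT.2.2.2.1 x α h).exists
  rw [predAt, dif_pos hex]
  exact hex.choose_spec

theorem predAt_lt_predAt (hT : T.IsOfHeight lam) {x : T.carrier} {α₀ α₁ : Ordinal.{0}}
    (h₀₁ : α₀ < α₁) (h₁ : α₁ < T.level x) : T.lt (T.predAt x α₀) (T.predAt x α₁) := by
  obtain ⟨hlt₀, hlev₀⟩ := predAt_spec hT (h₀₁.trans h₁)
  obtain ⟨hlt₁, hlev₁⟩ := predAt_spec hT h₁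
  obtain ⟨-, -, hmono, -, hcomp, -, -⟩ := hT
  rcases hcomp _ _ _ hlt₀ hlt₁ with h | h | h
  · exact absurd (congrArg T.level h) (by rw [hlev₀, hlev₁]; exact h₀₁.ne)
  · exact h
  · exact absurd (hmono _ _ h) (by rw [hlev₀, hlev₁]; exact h₀₁.not_gt)

def toSysData (T : OrdTree) (I : Set Ordinal.{0}) (θFun : Ordinal.{0} → Cardinal.{0})
    (nd : Ordinal.{0} → Ordinal.{0} → T.carrier) : SysData where
  I := I
  θFun := θFun
  ι := Unit
  rel _ a b := T.lt (nd a.1 a.2) (nd b.1 b.2)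

section toSysData

variable {I : Set Ordinal.{0}} {θFun : Ordinal.{0} → Cardinal.{0}}
  {nd : Ordinal.{0} → Ordinal.{0} → T.carrier}

theorem isKSystem_toSysData {κ : Cardinal.{0}} (hT : T.IsOfHeight lam) (hκ : 1 < κ)
    (hI : I ⊆ Iio κ.ord) (hIcof : ∀ η < κ.ord, ∃ α ∈ I, η ≤ α)
    (hθ : ∀ α ∈ I, 0 < θFun α ∧ θFun α < κ)
    (hlev : ∀ α ∈ I, ∀ β < (θFun α).ord, T.level (nd α β) = α)
    (hinj : ∀ α ∈ I, InjOn (nd α) (Iio (θFun α).ord))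
    (hlink : ∀ α₀ ∈ I, ∀ α₁ ∈ I, α₀ < α₁ →
      ∃ β₀ < (θFun α₀).ord, ∃ β₁ < (θFun α₁).ord, T.lt (nd α₀ β₀) (nd α₁ β₁)) :
    IsKSystem κ (T.toSysData I θFun nd) := by
  obtain ⟨htrans, -, hmono, -, hcomp, -, -⟩ := hT
  refine ⟨hI, hIcof, hθ, ⟨()⟩, by rwa [toSysData, mk_fintype, Fintype.card_unit, Nat.cast_one],
    fun _ _ _ _ => htrans _ _ _, ?_, ?_, ?_⟩
  · rintro r ⟨a₁, a₂⟩ ⟨b₁, b₂⟩ c ⟨ha₁, ha₂⟩ ⟨hb₁, hb₂⟩ - hac hbc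
    rcases hcomp _ _ _ hac hbc with h | h | h
    · have h₁ : a₁ = b₁ := by
        rw [← hlev a₁ ha₁ a₂ ha₂, ← hlev b₁ hb₁ b₂ hb₂, h]
      subst h₁
      exact Or.inl (Prod.ext rfl (hinj a₁ ha₁ ha₂ hb₂ h))
    · exact Or.inr (Or.inl h)
    · exact Or.inr (Or.inr h)
  · rintro r ⟨a₁, a₂⟩ ⟨b₁, b₂⟩ ⟨ha₁, ha₂⟩ ⟨hb₁, hb₂⟩ h
    simpa only [hlev a₁ ha₁ a₂ ha₂, hlev b₁ hb₁ b₂ hb₂] using hmono _ _ h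
  · intro α₀ h₀ α₁ h₁ h₀₁
    obtain ⟨β₀, hβ₀, β₁, hβ₁, h⟩ := hlink α₀ h₀ α₁ h₁ h₀₁
    exact ⟨β₀, β₁, (), hβ₀, hβ₁, h⟩

theorem exists_cofinalBranch_of_hasCofinalSysBranch {κ : Cardinal.{0}}
    (hlev : ∀ α ∈ I, ∀ β < (θFun α).ord, T.level (nd α β) = α)
    (h : HasCofinalSysBranch κ (T.toSysData I θFun nd)) : ∃ B, T.CofinalBranch κ.ord B := by
  obtain ⟨r, B, hBdom, hBcomp, hBcof⟩ := h
  refine ⟨(fun a => nd a.1 a.2) '' B, ?_, fun η hη => ?_⟩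
  · rintro - ⟨a, ha, rfl⟩ - ⟨b, hb, rfl⟩
    rcases hBcomp a ha b hb with rfl | h | h
    exacts [Or.inl rfl, Or.inr (Or.inl h), Or.inr (Or.inr h)]
  · obtain ⟨a, ha, hηa⟩ := hBcof η hη
    exact ⟨_, ⟨a, ha, rfl⟩, (hlev _ (hBdom ha).1 _ (hBdom ha).2).symm ▸ hηa⟩

end toSysData

theorem exists_cofinalBranch_of_linked {θ κ : Cardinal.{0}} (hT : T.IsOfHeight κ.ord)
    (hκ : κ.IsRegular) (hθκ : θ < κ)
    (hNSP : ∀ S : SysData, IsKSystem κ S → WidthLt S θ → HasCofinalSysBranch κ S)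
    (H : Ordinal.{0} → Set T.carrier) (hHlev : ∀ α < κ.ord, H α ⊆ {x | T.level x = α})
    (hHne : ∀ α < κ.ord, (H α).Nonempty) (hHθ : ∀ α < κ.ord, #(H α) < θ)
    (hlink : ∀ α₀ α₁, α₀ < α₁ → α₁ < κ.ord → ∃ x ∈ H α₀, ∃ y ∈ H α₁, T.lt x y) :
    ∃ B, T.CofinalBranch κ.ord B := by
  obtain ⟨ξ, hξ, hIcof⟩ := hκ.exists_cofinal_fiber (by rwa [card_ord])
    (fun α => (#(H α)).ord) fun α hα => ord_lt_ord.2 (hHθ α hα)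
  set I := {α | α < κ.ord ∧ (#(H α)).ord = ξ}
  set ν := ξ.card
  have hI : ∀ α ∈ I, #(H α) = ν := fun α hα =>
    (card_ord _).symm.trans (congrArg Ordinal.card hα.2)
  have hν : ν < θ := lt_ord.1 hξ
  have hν0 : 0 < ν := by
    obtain ⟨α, hα, -⟩ := hIcof 0 (ord_pos.2 hκ.pos)
    exact hI α hα ▸ pos_iff_ne_zero.2 (mk_ne_zero_iff.2 (hHne α hα.1).to_subtype)
  have : Nonempty T.carrier := (hHne 0 (ord_pos.2 hκ.pos)).to_subtype.map Subtype.val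
  choose nd hnd using fun α => exists_bijOn_Iio_ord (H α)
  have hbij : ∀ α ∈ I, BijOn (nd α) (Iio ν.ord) (H α) := fun α hα => hI α hα ▸ hnd α
  have hlev : ∀ α ∈ I, ∀ β < ν.ord, T.level (nd α β) = α :=
    fun α hα β hβ => hHlev α hα.1 ((hbij α hα).mapsTo hβ)
  have hsys : IsKSystem κ (T.toSysData I (fun _ => ν) nd) := by
    refine isKSystem_toSysData hT (one_lt_aleph0.trans_le hκ.aleph0_le) (fun α hα => hα.1)
      hIcof (fun _ _ => ⟨hν0, hν.trans hθκ⟩) hlev (fun α hα => (hbij α hα).injOn) ?_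
    intro α₀ h₀ α₁ h₁ h₀₁
    obtain ⟨x, hx, y, hy, hxy⟩ := hlink α₀ α₁ h₀₁ h₁.1
    obtain ⟨β₀, hβ₀, rfl⟩ := (hbij α₀ h₀).surjOn hx
    obtain ⟨β₁, hβ₁, rfl⟩ := (hbij α₁ h₁).surjOn hy
    exact ⟨β₀, hβ₀, β₁, hβ₁, hxy⟩
  have hwidth : WidthLt (T.toSysData I (fun _ => ν) nd) θ :=
    ⟨ν, hν, by rwa [toSysData, mk_fintype, Fintype.card_unit, Nat.cast_one,
      Cardinal.one_le_iff_pos],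
      fun _ _ => le_rfl⟩
  exact exists_cofinalBranch_of_hasCofinalSysBranch hlev (hNSP _ hsys hwidth)

end OrdTree

theorem stmt9_general {K : Type} (θ κ : Cardinal.{0})
    (hθκ : θ < κ)
    (hκreg : κ.IsRegular) (hK : #K = κ)
    (hNSP : ∀ S : SysData, IsKSystem κ S → WidthLt S θ → HasCofinalSysBranch κ S)
    (U : Ultrafilter K) (hU : UniformUF U)
    (hind : ∀ μ : Cardinal.{0}, θ ≤ μ → μ < κ → ¬ MuDecomposable U μ) :
    ∀ T : OrdTree, T.IsOfHeight κ.ord → T.SmallLevels κ.ord κ →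
      ∃ B, T.CofinalBranch κ.ord B := by
  intro T hT hS
  obtain ⟨lv, hlvκ, hlvU⟩ := hU.exists_lt_ord_eventually_gt hK hκreg.aleph0_le
  choose x hx using fun k => hT.2.2.2.2.2.2 (lv k) (hlvκ k)
  have hH : ∀ α < κ.ord, ∃ H ⊆ {y | T.level y = α}, #H < θ ∧
      (fun k => T.predAt (x k) α) ⁻¹' H ∈ U := fun α hα =>
    exists_subset_mk_lt_preimage_mem hind _ (hS α hα) <| Filter.mem_of_superset (hlvU α hα)
      fun k hk => (T.predAt_spec hT (hx k ▸ hk)).2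
  choose! H hHlev hHθ hHU using hH
  refine T.exists_cofinalBranch_of_linked hT hκreg hθκ hNSP H hHlev
    (fun α hα => let ⟨_, hk⟩ := U.nonempty_of_mem (hHU α hα); ⟨_, hk⟩) hHθ ?_
  intro α₀ α₁ h₀₁ h₁
  obtain ⟨k, ⟨hk₀, hk₁⟩, hk⟩ := U.nonempty_of_mem <|
    Filter.inter_mem (Filter.inter_mem (hHU α₀ (h₀₁.trans h₁)) (hHU α₁ h₁)) (hlvU α₁ h₁)
  exact ⟨_, hk₀, _, hk₁, T.predAt_lt_predAt hT h₀₁ (hx k ▸ hk)⟩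

/-- If `θ < κ` are uncountable cardinals, `κ` is regular, `NSP(θ,κ)` holds (every
narrow `κ`-system of width `< θ` has a cofinal branch), and `κ` carries a uniform
ultrafilter that is `μ`-indecomposable for every cardinal `μ ∈ [θ,κ)`, then `κ` has
the tree property. -/
theorem stmt9 {K : Type} (θ κ : Cardinal.{0})
    (hθunc : Cardinal.aleph0 < θ) (hκunc : Cardinal.aleph0 < κ) (hθκ : θ < κ)
    (hκreg : κ.IsRegular) (hK : #K = κ)
    (hNSP : ∀ S : SysData, IsKSystem κ S → WidthLt S θ → HasCofinalSysBranch κ S)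
    (U : Ultrafilter K) (hU : UniformUF U)
    (hind : ∀ μ : Cardinal.{0}, θ ≤ μ → μ < κ → ¬ MuDecomposable U μ) :
    ∀ T : OrdTree, T.IsOfHeight κ.ord → T.SmallLevels κ.ord κ →
      ∃ B, T.CofinalBranch κ.ord B :=
  stmt9_general θ κ hθκ hκreg hK hNSP U hU hind
end

section
/- Let F be a uniform filter on an infinite cardinal μ, and let κ be a strongly inaccessible cardinal such that every κ-Aronszajn tree admits an F-ascent path. Then pr₁(κ, κ, 2, (2, μ⁺)) fails: for every coloring c : [κ]² → 2 there exist A ⊆ κ of size κ, a cardinal σ ≤ μ, a pairwise disjoint family B ⊆ [κ]^σ of size κ, and a color τ < 2 such that for no α ∈ A and b ∈ B with α < min(b) does c''({α} × b) = {τ}. -/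
/-!
Suppose `c` witnesses `pr₁`. Applying `pr₁` with colour `false` to the complement of the set `D`
of those `α` that are `false`-homogeneous below some member of a family, and then with colour
`true` to `D` itself, produces a single `α` that is `false`-homogeneous below one member of a
family and `true`-homogeneous below another.

If `κ ≤ μ`, the rows and the columns of a grid `κ × κ ⊆ κ` are such families, and a row meets
every column. If `μ < κ`, consider the tree of `c`, whose nodes of level `α` are the traces
`c(·, β) ↾ α` for `β ≥ α`; its levels have size `≤ 2^|α| < κ`. A cofinal branch yields witnesses
`β_a > a` whose colours at `a` are coherent; taking singletons `{β_a}` for `a` in a set so sparse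
that each `β_a` lies below the next element forces `α ≤ a`, so both colours at `α` equal
`c(α, β_α)`. Otherwise the tree is Aronszajn and has an `F`-ascent path; the
sets consisting of `a`, the `μ` witnesses of the path at level `a`, and some padding, form a
disjoint family, and at a coordinate where the path ascends from one set to the other both
colours are read off the same node.
-/

open Set Cardinal

/-- `T` is a `κ`-Aronszajn tree. -/
def OrdTree.Aronszajn (T : OrdTree) (κ : Cardinal.{0}) : Prop :=
  T.IsOfHeight κ.ord ∧ T.SmallLevels κ.ord κ ∧ ¬ ∃ B, T.CofinalBranch κ.ord B

/-- `f` is an `F`-ascent path through `T` (of height `κ`). -/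
def OrdTree.AscentPath {M : Type} (T : OrdTree) (κ : Cardinal.{0}) (F : Filter M)
    (f : Ordinal.{0} → M → T.carrier) : Prop :=
  (∀ α < κ.ord, ∀ i, T.level (f α i) = α) ∧
  ∀ α β, α < β → β < κ.ord → {i | T.lt (f α i) (f β i)} ∈ F

theorem Cardinal.mk_eq_or_mk_sdiff_eq {α : Type*} {A D : Set α} (hD : D ⊆ A) (hA : ℵ₀ ≤ #A) :
    #D = #A ∨ #(A \ D : Set α) = #A := by
  by_contra! h
  exact (add_lt_of_lt hA ((mk_le_mk_of_subset sdiff_subset).lt_of_ne h.2)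
    ((mk_le_mk_of_subset hD).lt_of_ne h.1)).ne (mk_sdiff_add_mk hD)

theorem Cardinal.mk_image_add_union_range {M : Type} {μ : Cardinal.{0}} (hμ : ℵ₀ ≤ μ)
    (hM : #M ≤ μ) (a : Ordinal.{0}) (g : M → Ordinal.{0}) :
    #((a + ·) '' Iio μ.ord ∪ range g : Set Ordinal.{0}) = lift.{1} μ := by
  have hpad : #((a + ·) '' Iio μ.ord) = lift.{1} μ := by
    rw [mk_image_eq (add_right_injective a), mk_Iio_ordinal, card_ord]
  refine le_antisymm ?_ (hpad.symm.le.trans (mk_le_mk_of_subset subset_union_left))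
  calc _ ≤ #((a + ·) '' Iio μ.ord) + #(range g) := mk_union_le _ _
    _ ≤ lift.{1} μ + lift.{1} μ :=
      add_le_add hpad.le (by simpa using (mk_range_le_lift (f := g)).trans (lift_le.mpr hM))
    _ = lift.{1} μ := add_eq_self (aleph0_le_lift.mpr hμ)

namespace Ordinal

noncomputable def separatingSeq (N : Ordinal.{0} → Ordinal.{0}) : Ordinal.{0} → Ordinal.{0} :=
  wellFounded_lt.fix fun ξ ih => ⨆ ζ : Iio ξ, max (ih ζ ζ.2) (N (ih ζ ζ.2)) + 1

variable {N : Ordinal.{0} → Ordinal.{0}}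

theorem separatingSeq_eq (ξ : Ordinal.{0}) :
    separatingSeq N ξ = ⨆ ζ : Iio ξ, max (separatingSeq N ζ) (N (separatingSeq N ζ)) + 1 :=
  wellFounded_lt.fix_eq _ ξ

theorem max_separatingSeq_lt {ζ ξ : Ordinal.{0}} (h : ζ < ξ) :
    max (separatingSeq N ζ) (N (separatingSeq N ζ)) < separatingSeq N ξ := by
  rw [separatingSeq_eq ξ]
  exact (lt_add_one _).trans_le <| le_ciSup (f := fun ζ : Iio ξ => _ + 1) bddAbove_of_small ⟨ζ, h⟩

theorem separatingSeq_lt_ord {κ : Cardinal.{0}} (hκ : κ.IsRegular)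
    (hN : ∀ a < κ.ord, N a < κ.ord) {ξ : Ordinal.{0}} (hξ : ξ < κ.ord) :
    separatingSeq N ξ < κ.ord := by
  induction ξ using WellFoundedLT.induction with
  | ind ξ ih =>
    rw [separatingSeq_eq]
    refine lift_iSup_add_one_lt_of_lt_cof ?_ fun ζ => ?_
    · rw [Cardinal.lift_id', Cardinal.mk_Iio_ordinal, ← lift_cof, hκ.cof_ord, Cardinal.lift_lt]
      exact Cardinal.lt_ord.mp hξ
    · have hζ := ih ζ ζ.2 (ζ.2.trans hξ)
      exact max_lt hζ (hN _ hζ)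

theorem exists_sparse_subset {κ : Cardinal.{0}} (hκ : κ.IsRegular)
    (hN : ∀ a < κ.ord, N a < κ.ord) :
    ∃ S ⊆ Iio κ.ord, #S = Cardinal.lift.{1} κ ∧ ∀ a ∈ S, ∀ b ∈ S, a < b → N a < b := by
  have hmono : StrictMono (separatingSeq N) := fun ζ ξ h =>
    (le_max_left _ _).trans_lt (max_separatingSeq_lt h)
  refine ⟨separatingSeq N '' Iio κ.ord, ?_, ?_, ?_⟩
  · rintro _ ⟨ξ, hξ, rfl⟩
    exact separatingSeq_lt_ord hκ hN hξ
  · rw [mk_image_eq_of_injOn _ _ hmono.injective.injOn, Cardinal.mk_Iio_ordinal, card_ord]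
  · rintro _ ⟨ζ, -, rfl⟩ _ ⟨ξ, -, rfl⟩ h
    exact (le_max_right _ _).trans_lt (max_separatingSeq_lt (hmono.lt_iff_lt.mp h))

end Ordinal

def IsDisjointFamily (κ σ : Cardinal.{0}) (Bf : Set (Set Ordinal.{0})) : Prop :=
  (∀ b ∈ Bf, b ⊆ Iio κ.ord ∧ #b = lift.{1} σ) ∧
    (∀ b ∈ Bf, ∀ b' ∈ Bf, b ≠ b' → Disjoint b b') ∧ #Bf = lift.{1} κ

theorem isDisjointFamily_range {κ : Cardinal.{0}} {X : Type 1} [Nonempty X]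
    (hX : #X = lift.{1} κ) {F : X → X → Ordinal.{0}} (hF : Function.Injective (Function.uncurry F))
    (hlt : ∀ η ξ, F η ξ < κ.ord) : IsDisjointFamily κ κ (range fun η => range (F η)) := by
  have hF' : ∀ {η η' ξ ξ'}, F η ξ = F η' ξ' → η = η' ∧ ξ = ξ' := fun h =>
    Prod.ext_iff.mp (@hF (_, _) (_, _) h)
  have hinj : Function.Injective fun η => range (F η) := by
    intro η η' h
    obtain ⟨ξ₀⟩ := ‹Nonempty X›
    obtain ⟨ξ, hξ⟩ := (Set.ext_iff.mp h (F η ξ₀)).mp (mem_range_self ξ₀)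
    exact (hF' hξ).1.symm
  refine ⟨?_, ?_, by rw [mk_range_eq _ hinj, hX]⟩
  · rintro _ ⟨η, rfl⟩
    refine ⟨range_subset_iff.mpr (hlt η), ?_⟩
    rw [mk_range_eq _ fun ξ ξ' h => (hF' h).2, hX]
  · rintro _ ⟨η, rfl⟩ _ ⟨η', rfl⟩ hne
    refine disjoint_left.mpr ?_
    rintro _ ⟨ξ, rfl⟩ ⟨ξ', h⟩
    exact hne (congrArg (fun η => range (F η)) (hF' h).1.symm)

theorem exists_grid {κ : Cardinal.{0}} (hκ : ℵ₀ ≤ κ) :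
    ∃ R C : Set (Set Ordinal.{0}), IsDisjointFamily κ κ R ∧ IsDisjointFamily κ κ C ∧
      ∀ r ∈ R, ∀ b ∈ C, (r ∩ b).Nonempty := by
  have hX : #(Iio κ.ord) = lift.{1} κ := by rw [mk_Iio_ordinal, card_ord]
  obtain ⟨e⟩ : Nonempty (Iio κ.ord × Iio κ.ord ≃ Iio κ.ord) := by
    rw [← Cardinal.eq, mk_prod, lift_id, mul_eq_self (hX ▸ aleph0_le_lift.mpr hκ)]
  have : Nonempty (Iio κ.ord) := ⟨⟨0, ord_pos.mpr (aleph0_pos.trans_le hκ)⟩⟩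
  let F : Iio κ.ord → Iio κ.ord → Ordinal.{0} := fun η ξ => e (η, ξ)
  have hF : Function.Injective (Function.uncurry F) := fun p q h => e.injective (Subtype.ext h)
  refine ⟨_, _, isDisjointFamily_range hX hF fun η ξ => (e (η, ξ)).2,
    isDisjointFamily_range (F := fun ξ η => F η ξ) hX (hF.comp Prod.swap_injective)
      fun ξ η => (e (η, ξ)).2, ?_⟩
  rintro _ ⟨η, rfl⟩ _ ⟨ξ, rfl⟩
  exact ⟨F η ξ, mem_range_self ξ, mem_range_self η⟩

theorem isDisjointFamily_image {κ σ : Cardinal.{0}} {N : Ordinal.{0} → Ordinal.{0}}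
    {S : Set Ordinal.{0}} (hS : #S = lift.{1} κ) (hsep : ∀ a ∈ S, ∀ b ∈ S, a < b → N a < b)
    {Bs : Ordinal.{0} → Set Ordinal.{0}} (hne : ∀ a ∈ S, (Bs a).Nonempty)
    (hBs : ∀ a ∈ S, Bs a ⊆ Icc a (N a)) (hκ : ∀ a ∈ S, Bs a ⊆ Iio κ.ord)
    (hσ : ∀ a ∈ S, #(Bs a) = lift.{1} σ) : IsDisjointFamily κ σ (Bs '' S) := by
  have hdisj : ∀ a ∈ S, ∀ b ∈ S, a < b → Disjoint (Bs a) (Bs b) := fun a ha b hb hab =>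
    disjoint_left.mpr fun x hxa hxb =>
      ((hBs a ha hxa).2.trans_lt (hsep a ha b hb hab)).not_ge (hBs b hb hxb).1
  have hinj : InjOn Bs S := by
    intro a ha b hb h
    by_contra hab
    rcases lt_or_gt_of_ne hab with hab | hba
    · exact (hne b hb).ne_empty (disjoint_self.mp (h ▸ hdisj a ha b hb hab))
    · exact (hne a ha).ne_empty (disjoint_self.mp (h ▸ hdisj b hb a ha hba))
  refine ⟨?_, ?_, by rw [mk_image_eq_of_injOn _ _ hinj, hS]⟩
  · rintro _ ⟨a, ha, rfl⟩
    exact ⟨hκ a ha, hσ a ha⟩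
  · rintro _ ⟨a, ha, rfl⟩ _ ⟨b, hb, rfl⟩ hab
    rcases lt_trichotomy a b with hab | rfl | hba
    · exact hdisj a ha b hb hab
    · exact absurd rfl hab
    · exact (hdisj b hb a ha hba).symm

/-- `c` witnesses `pr₁(κ, κ, 2, (2, μ⁺))`; the bound `σ < μ⁺` is written `σ ≤ μ`. -/
def Pr1 (c : Ordinal.{0} → Ordinal.{0} → Bool) (κ μ : Cardinal.{0}) : Prop :=
  ∀ A ⊆ Iio κ.ord, #A = lift.{1} κ → ∀ σ ≤ μ, ∀ Bf, IsDisjointFamily κ σ Bf → ∀ τ : Bool,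
    ∃ α ∈ A, ∃ b ∈ Bf, (∀ x ∈ b, α < x) ∧ ∀ x ∈ b, c α x = τ

section Pr1

variable {c : Ordinal.{0} → Ordinal.{0} → Bool} {κ μ : Cardinal.{0}}

theorem Pr1.exists_bicolored (h : Pr1 c κ μ) (hκ : ℵ₀ ≤ κ) {A : Set Ordinal.{0}}
    (hA : A ⊆ Iio κ.ord) (hAκ : #A = lift.{1} κ) {σ₀ σ₁ : Cardinal.{0}} (hσ₀ : σ₀ ≤ μ)
    (hσ₁ : σ₁ ≤ μ) {B₀ B₁ : Set (Set Ordinal.{0})} (hB₀ : IsDisjointFamily κ σ₀ B₀)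
    (hB₁ : IsDisjointFamily κ σ₁ B₁) :
    ∃ α ∈ A, ∃ b₀ ∈ B₀, ∃ b₁ ∈ B₁, (∀ x ∈ b₀, α < x ∧ c α x = false) ∧
      ∀ x ∈ b₁, α < x ∧ c α x = true := by
  set D := {α ∈ A | ∃ b₀ ∈ B₀, (∀ x ∈ b₀, α < x) ∧ ∀ x ∈ b₀, c α x = false}
  rcases mk_eq_or_mk_sdiff_eq (sep_subset A _) (hAκ ▸ aleph0_le_lift.mpr hκ) with hD | hAD
  · obtain ⟨α, ⟨hαA, b₀, hb₀, hα₀, hc₀⟩, b₁, hb₁, hα₁, hc₁⟩ :=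
      h D ((sep_subset A _).trans hA) (hD.trans hAκ) σ₁ hσ₁ B₁ hB₁ true
    exact ⟨α, hαA, b₀, hb₀, b₁, hb₁, fun x hx => ⟨hα₀ x hx, hc₀ x hx⟩,
      fun x hx => ⟨hα₁ x hx, hc₁ x hx⟩⟩
  · obtain ⟨α, ⟨hαA, hαD⟩, b₀, hb₀, hα₀, hc₀⟩ :=
      h (A \ D) (sdiff_subset.trans hA) (hAD.trans hAκ) σ₀ hσ₀ B₀ hB₀ false
    exact absurd ⟨hαA, b₀, hb₀, hα₀, hc₀⟩ hαD

theorem not_pr1_of_le (hκ : ℵ₀ ≤ κ) (hκμ : κ ≤ μ) : ¬ Pr1 c κ μ := by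
  intro h
  obtain ⟨R, C, hR, hC, hRC⟩ := exists_grid hκ
  obtain ⟨α, -, r, hr, b, hb, hr', hb'⟩ := h.exists_bicolored hκ subset_rfl
    (by rw [mk_Iio_ordinal, card_ord]) hκμ hκμ hR hC
  obtain ⟨x, hxr, hxb⟩ := hRC r hr b hb
  exact Bool.false_ne_true ((hr' x hxr).2.symm.trans (hb' x hxb).2)

theorem not_pr1_of_coherent (hκ : κ.IsRegular) (hμ : 1 ≤ μ) {β : Ordinal.{0} → Ordinal.{0}}
    (hβ : ∀ a < κ.ord, a < β a ∧ β a < κ.ord)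
    (hcoh : ∀ a a', a ≤ a' → a' < κ.ord → c a (β a) = c a (β a')) : ¬ Pr1 c κ μ := by
  intro h
  obtain ⟨S, hSκ, hS, hsep⟩ := Ordinal.exists_sparse_subset hκ fun a ha => (hβ a ha).2
  have hB : IsDisjointFamily κ 1 ((fun a => {β a}) '' S) :=
    isDisjointFamily_image hS hsep (fun a _ => singleton_nonempty _)
      (fun a ha => singleton_subset_iff.mpr ⟨(hβ a (hSκ ha)).1.le, le_rfl⟩)
      (fun a ha => singleton_subset_iff.mpr (hβ a (hSκ ha)).2) (fun a _ => by simp)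
  obtain ⟨α, hα, _, ⟨a₀, ha₀, rfl⟩, _, ⟨a₁, ha₁, rfl⟩, h₀, h₁⟩ :=
    h.exists_bicolored hκ.aleph0_le hSκ hS hμ hμ hB hB
  simp only [mem_singleton_iff, forall_eq] at h₀ h₁
  have hle : ∀ a ∈ S, α < β a → α ≤ a := fun a ha hαa =>
    not_lt.mp fun h => (hsep a ha α hα h).not_gt hαa
  rw [← hcoh α a₀ (hle a₀ ha₀ h₀.1) (hSκ ha₀)] at h₀
  rw [← hcoh α a₁ (hle a₁ ha₁ h₁.1) (hSκ ha₁)] at h₁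
  exact Bool.false_ne_true (h₀.2.symm.trans h₁.2)

theorem not_pr1_of_ascent {M : Type} {F : Filter M} [F.NeBot] (hκ : κ.IsRegular) (hμ : ℵ₀ ≤ μ)
    (hM : #M = μ) (hμκ : μ < κ) {w : Ordinal.{0} → M → Ordinal.{0}}
    (hw : ∀ a < κ.ord, ∀ i, a ≤ w a i ∧ w a i < κ.ord)
    (hF : ∀ a b, a < b → b < κ.ord → {i | ∀ γ < a, c γ (w a i) = c γ (w b i)} ∈ F) :
    ¬ Pr1 c κ μ := by
  intro h
  -- `a ∈ Bs a` puts every `α` below `Bs a` under level `a`; the padding makes `#(Bs a) = μ`.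
  let Bs : Ordinal.{0} → Set Ordinal.{0} := fun a => (a + ·) '' Iio μ.ord ∪ range (w a)
  let N : Ordinal.{0} → Ordinal.{0} := fun a => max (a + μ.ord) (⨆ i, w a i)
  have hN : ∀ a < κ.ord, N a < κ.ord := fun a ha =>
    max_lt (Ordinal.isPrincipal_add_ord hκ.aleph0_le ha (ord_lt_ord.mpr hμκ))
      (Ordinal.iSup_lt_of_lt_cof (by rwa [hM, hκ.cof_ord]) fun i => (hw a ha i).2)
  obtain ⟨S, hSκ, hS, hsep⟩ := Ordinal.exists_sparse_subset hκ hN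
  have hBs : ∀ a ∈ S, Bs a ⊆ Icc a (N a) := by
    rintro a ha x (⟨u, hu, rfl⟩ | ⟨i, rfl⟩)
    · exact ⟨le_self_add, (add_lt_add_right hu a).le.trans (le_max_left _ _)⟩
    · exact ⟨(hw a (hSκ ha) i).1,
        (le_ciSup Ordinal.bddAbove_of_small i).trans (le_max_right _ _)⟩
  have hmem : ∀ a, a ∈ Bs a := fun a =>
    Or.inl ⟨0, ord_pos.mpr (aleph0_pos.trans_le hμ), add_zero a⟩
  have hB : IsDisjointFamily κ μ (Bs '' S) :=
    isDisjointFamily_image hS hsep (fun a _ => ⟨a, hmem a⟩) hBs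
      (fun a ha => (hBs a ha).trans fun x hx => hx.2.trans_lt (hN a (hSκ ha)))
      fun a _ => mk_image_add_union_range hμ hM.le a (w a)
  obtain ⟨α, -, _, ⟨a₀, ha₀, rfl⟩, _, ⟨a₁, ha₁, rfl⟩, h₀, h₁⟩ :=
    h.exists_bicolored hκ.aleph0_le subset_rfl (by rw [mk_Iio_ordinal, card_ord])
      le_rfl le_rfl hB hB
  have hsplit : ∀ {a b τ}, a < b → b ∈ S → (∀ x ∈ Bs a, α < x ∧ c α x = τ) →
      (∀ x ∈ Bs b, α < x ∧ c α x = !τ) → False := by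
    intro a b τ hab hb ha hb'
    obtain ⟨i, hi⟩ := Filter.nonempty_of_mem (hF a b hab (hSκ hb))
    have := hi α (ha a (hmem a)).1
    rw [(ha _ (Or.inr ⟨i, rfl⟩)).2, (hb' _ (Or.inr ⟨i, rfl⟩)).2] at this
    exact Bool.eq_not_self τ |>.mp this
  rcases lt_trichotomy a₀ a₁ with hlt | rfl | hgt
  · exact hsplit hlt ha₁ h₀ h₁
  · exact Bool.false_ne_true ((h₀ a₀ (hmem a₀)).2.symm.trans (h₁ a₀ (hmem a₀)).2)
  · exact hsplit hgt ha₀ h₁ h₀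

end Pr1

noncomputable section
namespace ColorTree

variable (c : Ordinal.{0} → Ordinal.{0} → Bool) (θ : Ordinal.{0})

/-- `(α, β)` with `α ≤ β < θ`, coded in `θ.ToType` so that nodes form a `Type`; it stands for
the node of level `α` carrying the trace `c(·, β)` below `α`. -/
def Pair := {p : θ.ToType × θ.ToType // p.1 ≤ p.2}

variable {c θ}

def Pair.lev (p : Pair θ) : Ordinal.{0} := p.1.1

def Pair.wit (p : Pair θ) : Ordinal.{0} := p.1.2

def Pair.ofOrd (α β : Ordinal.{0}) (hαβ : α ≤ β) (hβ : β < θ) : Pair θ :=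
  ⟨(Ordinal.ToType.mk ⟨α, hαβ.trans_lt hβ⟩, Ordinal.ToType.mk ⟨β, hβ⟩),
    Ordinal.ToType.mk.monotone hαβ⟩

theorem Pair.lev_ofOrd {α β : Ordinal.{0}} (hαβ : α ≤ β) (hβ : β < θ) :
    (Pair.ofOrd α β hαβ hβ).lev = α := by
  simp [Pair.ofOrd, Pair.lev]

theorem Pair.wit_ofOrd {α β : Ordinal.{0}} (hαβ : α ≤ β) (hβ : β < θ) :
    (Pair.ofOrd α β hαβ hβ).wit = β := by
  simp [Pair.ofOrd, Pair.wit]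

variable (c θ) in
def setoid : Setoid (Pair θ) where
  r p q := p.lev = q.lev ∧ ∀ γ < p.lev, c γ p.wit = c γ q.wit
  iseqv := ⟨fun _ => ⟨rfl, fun _ _ => rfl⟩,
    fun h => ⟨h.1.symm, fun γ hγ => (h.2 γ (h.1 ▸ hγ)).symm⟩,
    fun h h' => ⟨h.1.trans h'.1, fun γ hγ => (h.2 γ hγ).trans (h'.2 γ (h.1 ▸ hγ))⟩⟩

variable (c θ) in
def Node := Quotient (setoid c θ)

def Node.lev (x : Node c θ) : Ordinal.{0} := x.out.lev

def Node.wit (x : Node c θ) : Ordinal.{0} := x.out.wit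

theorem Node.eq_of_trace {x y : Node c θ} (h : x.lev = y.lev)
    (htr : ∀ γ < x.lev, c γ x.wit = c γ y.wit) : x = y :=
  Quotient.out_equiv_out.mp ⟨h, htr⟩

theorem Node.lev_lt (x : Node c θ) : x.lev < θ := (Ordinal.ToType.toOrd x.out.1.1).2

theorem Node.wit_lt (x : Node c θ) : x.wit < θ := (Ordinal.ToType.toOrd x.out.1.2).2

theorem Node.lev_le_wit (x : Node c θ) : x.lev ≤ x.wit :=
  Ordinal.ToType.mk.symm.monotone x.out.2

variable (c) in
def node (α β : Ordinal.{0}) (hαβ : α ≤ β) (hβ : β < θ) : Node c θ :=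
  Quotient.mk _ (Pair.ofOrd α β hαβ hβ)

theorem lev_node {α β : Ordinal.{0}} (hαβ : α ≤ β) (hβ : β < θ) :
    (node c α β hαβ hβ).lev = α :=
  (Quotient.mk_out (s := setoid c θ) _).1.trans (Pair.lev_ofOrd hαβ hβ)

theorem c_wit_node {α β : Ordinal.{0}} (hαβ : α ≤ β) (hβ : β < θ) {γ : Ordinal.{0}}
    (hγ : γ < α) : c γ (node c α β hαβ hβ).wit = c γ β :=
  ((Quotient.mk_out (s := setoid c θ) _).2 γ (hγ.trans_eq (lev_node hαβ hβ).symm)).trans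
    (by rw [Pair.wit_ofOrd])

variable (c θ) in
def colorTree : OrdTree where
  carrier := Node c θ
  lt x y := x.lev < y.lev ∧ ∀ γ < x.lev, c γ x.wit = c γ y.wit
  level := Node.lev

theorem c_wit_eq_of_comparable {x y : Node c θ}
    (hxy : x = y ∨ (colorTree c θ).lt x y ∨ (colorTree c θ).lt y x) {γ : Ordinal.{0}}
    (hx : γ < x.lev) (hy : γ < y.lev) : c γ x.wit = c γ y.wit := by
  rcases hxy with rfl | h | h
  · rfl
  · exact h.2 γ hx
  · exact (h.2 γ hy).symm

theorem isOfHeight_colorTree : (colorTree c θ).IsOfHeight θ := by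
  refine ⟨fun x y z h h' => ⟨h.1.trans h'.1, fun γ hγ => (h.2 γ hγ).trans (h'.2 γ (hγ.trans h.1))⟩,
    fun x h => lt_irrefl _ h.1, fun x y h => h.1, ?_, ?_, Node.lev_lt,
    fun α hα => ⟨node c α α le_rfl hα, lev_node _ _⟩⟩
  · intro y α hα
    refine ⟨node c α y.wit (hα.le.trans y.lev_le_wit) y.wit_lt,
      ⟨⟨?_, fun γ hγ => ?_⟩, lev_node _ _⟩, ?_⟩
    · rwa [lev_node]
    · rw [lev_node] at hγ
      exact c_wit_node _ _ hγ
    · rintro x ⟨hxy, rfl⟩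
      exact Node.eq_of_trace (lev_node _ _).symm fun γ hγ =>
        (hxy.2 γ hγ).trans (c_wit_node _ _ hγ).symm
  · intro x y z hx hy
    rcases lt_trichotomy x.lev y.lev with h | h | h
    · exact Or.inr (Or.inl ⟨h, fun γ hγ => (hx.2 γ hγ).trans (hy.2 γ (hγ.trans h)).symm⟩)
    · exact Or.inl (Node.eq_of_trace h fun γ hγ => (hx.2 γ hγ).trans (hy.2 γ (h ▸ hγ)).symm)
    · exact Or.inr (Or.inr ⟨h, fun γ hγ => (hy.2 γ hγ).trans (hx.2 γ (hγ.trans h)).symm⟩)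

theorem smallLevels_colorTree {κ : Cardinal.{0}} (hκ : IsStrongPrelimit κ) :
    (colorTree c κ.ord).SmallLevels κ.ord κ := by
  intro α hα
  have hinj : Function.Injective
      fun (x : {x : Node c κ.ord // x.lev = α}) (t : α.ToType) => c t x.1.wit := by
    intro x y h
    refine Subtype.ext (Node.eq_of_trace (x.2.trans y.2.symm) fun γ hγ => ?_)
    simpa using congrFun h (Ordinal.ToType.mk ⟨γ, x.2 ▸ hγ⟩)
  calc #{x : Node c κ.ord // x.lev = α} ≤ #(α.ToType → Bool) := mk_le_of_injective hinj
    _ = 2 ^ α.card := by rw [← power_def, mk_bool, mk_toType]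
    _ < κ := hκ (lt_ord.mp hα)

theorem exists_coherent_of_cofinalBranch (hθ : Order.IsSuccLimit θ) {B : Set (Node c θ)}
    (hB : (colorTree c θ).CofinalBranch θ B) :
    ∃ β : Ordinal.{0} → Ordinal.{0}, (∀ a < θ, a < β a ∧ β a < θ) ∧
      ∀ a a', a ≤ a' → a' < θ → c a (β a) = c a (β a') := by
  choose z hzB hz using fun a (ha : a < θ) =>
    (hB.2 (Order.succ a) (hθ.succ_lt ha) : ∃ x : Node c θ, x ∈ B ∧ Order.succ a ≤ x.lev)
  have hlt : ∀ a ha, a < (z a ha).lev := fun a ha => (Order.lt_succ a).trans_le (hz a ha)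
  refine ⟨fun a => if ha : a < θ then (z a ha).wit else 0, fun a ha => ?_, fun a a' h ha' => ?_⟩
  · simp only [dif_pos ha]
    exact ⟨(hlt a ha).trans_le (z a ha).lev_le_wit, (z a ha).wit_lt⟩
  · simp only [dif_pos (h.trans_lt ha'), dif_pos ha']
    exact c_wit_eq_of_comparable (hB.1 _ (hzB _ _) _ (hzB _ _)) (hlt a _)
      (h.trans_lt (hlt a' ha'))

theorem exists_coherent_of_ascentPath {κ : Cardinal.{0}} {M : Type} {F : Filter M}
    {f : Ordinal.{0} → M → Node c κ.ord} (hf : (colorTree c κ.ord).AscentPath κ F f) :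
    ∃ w : Ordinal.{0} → M → Ordinal.{0}, (∀ a < κ.ord, ∀ i, a ≤ w a i ∧ w a i < κ.ord) ∧
      ∀ a b, a < b → b < κ.ord → {i | ∀ γ < a, c γ (w a i) = c γ (w b i)} ∈ F := by
  refine ⟨fun a i => (f a i).wit, fun a ha i => ⟨?_, (f a i).wit_lt⟩, fun a b hab hb => ?_⟩
  · exact (hf.1 a ha i).symm.trans_le (f a i).lev_le_wit
  · refine Filter.mem_of_superset (hf.2 a b hab hb) fun i hi γ hγ => hi.2 γ ?_
    rwa [show (f a i).lev = a from hf.1 a (hab.trans hb) i]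

end ColorTree
end

theorem stmt10_general {M : Type} (μ κ : Cardinal.{0}) (hμ : ℵ₀ ≤ μ) (hM : #M = μ)
    (F : Filter M) (hFproper : F.NeBot)
    (hκ : κ.IsInaccessible)
    (hasc : ∀ T : OrdTree, T.Aronszajn κ → ∃ f, T.AscentPath κ F f)
    (c : Ordinal.{0} → Ordinal.{0} → Bool) :
    ∃ A : Set Ordinal.{0}, A ⊆ Set.Iio κ.ord ∧ #A = Cardinal.lift.{1} κ ∧
    ∃ σ : Cardinal.{0}, σ ≤ μ ∧
    ∃ Bf : Set (Set Ordinal.{0}),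
      (∀ b ∈ Bf, b ⊆ Set.Iio κ.ord ∧ #b = Cardinal.lift.{1} σ) ∧
      (∀ b ∈ Bf, ∀ b' ∈ Bf, b ≠ b' → Disjoint b b') ∧
      #Bf = Cardinal.lift.{1} κ ∧
    ∃ τ : Bool, ∀ α ∈ A, ∀ b ∈ Bf, (∀ x ∈ b, α < x) → ¬ ∀ x ∈ b, c α x = τ := by
  by_contra! hc
  have h : Pr1 c κ μ := fun A hA hAκ σ hσ Bf hB τ => hc A hA hAκ σ hσ Bf hB.1 hB.2.1 hB.2.2 τ
  rcases le_or_gt κ μ with hκμ | hμκ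
  · exact not_pr1_of_le hκ.aleph0_lt.le hκμ h
  by_cases hbr : ∃ B, (ColorTree.colorTree c κ.ord).CofinalBranch κ.ord B
  · obtain ⟨B, hB⟩ := hbr
    obtain ⟨β, hβ, hcoh⟩ := ColorTree.exists_coherent_of_cofinalBranch
      (isSuccLimit_ord hκ.isRegular.aleph0_le) hB
    exact not_pr1_of_coherent hκ.isRegular (one_le_aleph0.trans hμ) hβ hcoh h
  · obtain ⟨f, hf⟩ := hasc _ ⟨ColorTree.isOfHeight_colorTree,
      ColorTree.smallLevels_colorTree hκ.isStrongPrelimit, hbr⟩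
    obtain ⟨w, hw, hwF⟩ := ColorTree.exists_coherent_of_ascentPath hf
    exact not_pr1_of_ascent hκ.isRegular hμ hM hμκ hw hwF h

/-- Let `F` be a uniform filter on an infinite cardinal `μ` and `κ` a strongly
inaccessible cardinal such that every `κ`-Aronszajn tree admits an `F`-ascent path.
Then `pr₁(κ,κ,2,(2,μ⁺))` fails: for every `c : [κ]² → 2` there are `A ⊆ κ` of size
`κ`, a cardinal `σ ≤ μ`, a pairwise disjoint family `B ⊆ [κ]^σ` of size `κ`, and a
color `τ` such that for no `α ∈ A` and `b ∈ B` with `α < min b` is `c` constantly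
`τ` on `{α} × b`. -/
theorem stmt10 {M : Type} (μ κ : Cardinal.{0}) (hμ : ℵ₀ ≤ μ) (hM : #M = μ)
    (F : Filter M) (hFproper : F.NeBot) (hFuni : ∀ X ∈ F, #X = μ)
    (hκ : κ.IsInaccessible)
    (hasc : ∀ T : OrdTree, T.Aronszajn κ → ∃ f, T.AscentPath κ F f)
    (c : Ordinal.{0} → Ordinal.{0} → Bool) :
    ∃ A : Set Ordinal.{0}, A ⊆ Set.Iio κ.ord ∧ #A = Cardinal.lift.{1} κ ∧
    ∃ σ : Cardinal.{0}, σ ≤ μ ∧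
    ∃ Bf : Set (Set Ordinal.{0}),
      (∀ b ∈ Bf, b ⊆ Set.Iio κ.ord ∧ #b = Cardinal.lift.{1} σ) ∧
      (∀ b ∈ Bf, ∀ b' ∈ Bf, b ≠ b' → Disjoint b b') ∧
      #Bf = Cardinal.lift.{1} κ ∧
    ∃ τ : Bool, ∀ α ∈ A, ∀ b ∈ Bf, (∀ x ∈ b, α < x) → ¬ ∀ x ∈ b, c α x = τ :=
  stmt10_general μ κ hμ hM F hFproper hκ hasc c
end

section
/- Suppose κ > 2^{ℵ₀} is a regular cardinal, D is a nonprincipal ultrafilter on ω, and ⟨g_δ ∣ δ < κ⟩ is a sequence with g_δ : ω → T_δ (where (T, <_T) is a tree of height κ with levels T_δ of size < κ) such that for all γ < δ < κ, I_{γ,δ} := {i < ω ∣ g_γ(i) <_T g_δ(i)} ∈ D, and such that for each γ < κ there is a countable family 𝓘_γ ⊆ D and an infinite pseudointersection P_γ ⊆ ω of 𝓘_γ, and cofinally many δ > γ with I_{γ,δ} ∈ 𝓘_γ (in the sense that for every pair γ < δ there exists η > γ, δ with I_{γ,η} ∈ 𝓘_γ and I_{δ,η} ∈ 𝓘_δ).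 If moreover there is an infinite P ⊆ ω such that Γ := {γ < κ ∣ P_γ = P} is cofinal in κ, then for all γ < δ in Γ, g_γ(i) <_T g_δ(i) for all but finitely many i ∈ P; consequently ⟨g_γ ↾ P ∣ γ ∈ Γ⟩ induces an ω-ascent path through T restricted to levels in Γ. -/
open Set Cardinal

/-- Given `κ > 2^ℵ₀` regular, a nonprincipal ultrafilter `D` on `ω`, and a sequence
`⟨g_δ | δ < κ⟩` into the levels of a `κ`-tree that is `<_T`-increasing mod `D`,
together with countable families `𝓘_γ ⊆ D` with infinite pseudointersections `P_γ`,
the cofinal-interpolation property, and a single infinite `P` with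
`Γ = {γ | P_γ = P}` cofinal: for all `γ < δ` in `Γ`, `g_γ(i) <_T g_δ(i)` for all but
finitely many `i ∈ P`. -/
theorem stmt12 (κ : Cardinal.{0}) (hκreg : κ.IsRegular) (hκ : 2 ^ aleph0 < κ)
    (D : Ultrafilter ℕ) (hD : ∀ X : Set ℕ, X.Finite → X ∉ D)
    (T : OrdTree) (hT : T.IsOfHeight κ.ord) (hlev : T.SmallLevels κ.ord κ)
    (g : Ordinal.{0} → ℕ → T.carrier)
    (hg : ∀ δ < κ.ord, ∀ i, T.level (g δ i) = δ)
    (hmono : ∀ γ δ, γ < δ → δ < κ.ord → {i | T.lt (g γ i) (g δ i)} ∈ D)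
    (I : Ordinal.{0} → Set (Set ℕ)) (Pf : Ordinal.{0} → Set ℕ)
    (hI : ∀ γ < κ.ord, (I γ).Countable ∧ (∀ X ∈ I γ, X ∈ D) ∧
      (Pf γ).Infinite ∧ ∀ X ∈ I γ, (Pf γ \ X).Finite)
    (hcof : ∀ γ δ, γ < δ → δ < κ.ord → ∃ η, δ < η ∧ η < κ.ord ∧
      {i | T.lt (g γ i) (g η i)} ∈ I γ ∧ {i | T.lt (g δ i) (g η i)} ∈ I δ)
    (P : Set ℕ) (hP : P.Infinite)
    (hΓ : ∀ η < κ.ord, ∃ γ, η ≤ γ ∧ γ < κ.ord ∧ Pf γ = P) :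
    ∀ γ δ, γ < κ.ord → δ < κ.ord → γ < δ → Pf γ = P → Pf δ = P →
      {i ∈ P | ¬ T.lt (g γ i) (g δ i)}.Finite := by
  intro γ δ hγ hδ hγδ hPγ hPδ
  obtain ⟨η, hδη, hηκ, h1, h2⟩ := hcof γ δ hγδ hδ
  obtain ⟨-, -, -, hfinγ⟩ := hI γ hγ
  obtain ⟨-, -, -, hfinδ⟩ := hI δ hδ
  have f1 : (P \ {i | T.lt (g γ i) (g η i)}).Finite := hPγ ▸ hfinγ _ h1
  have f2 : (P \ {i | T.lt (g δ i) (g η i)}).Finite := hPδ ▸ hfinδ _ h2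
  refine (f1.union f2).subset ?_
  intro i ⟨hiP, hnlt⟩
  by_contra hcon
  simp only [Set.mem_union, Set.mem_diff, Set.mem_setOf_eq, not_or, not_and, not_not] at hcon
  have l1 : T.lt (g γ i) (g η i) := hcon.1 hiP
  have l2 : T.lt (g δ i) (g η i) := hcon.2 hiP
  obtain ⟨-, -, hlevmono, -, hcomp, -, -⟩ := hT
  rcases hcomp _ _ _ l1 l2 with heq | hlt | hlt
  · have := hg γ hγ i
    rw [heq, hg δ hδ i] at this
    exact absurd this (ne_of_gt hγδ)
  · exact hnlt hlt
  · have := hlevmono _ _ hlt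
    rw [hg γ hγ i, hg δ hδ i] at this
    exact absurd this (not_lt_of_gt hγδ)
end

section
/- Suppose κ is regular uncountable, U is a uniform ultrafilter over κ that is μ-indecomposable for all cardinals μ ∈ [θ, κ) for some uncountable θ with θ⁺ < κ, and (T, <_T) is a κ-tree (height κ, all levels of size < κ) with a transversal ⟨t_α ∈ T_α ∣ α < κ⟩. For each α < κ choose S_α ⊆ T_α with |S_α| < θ such that X_α := {β ∈ [α, κ) ∣ t_β ↾ α ∈ S_α} ∈ U (where t_β ↾ α is the unique predecessor of t_β on level α). Then for every pair α < β < κ there exist s ∈ S_α and t ∈ S_β with s <_T t; hence ⟨S_α ∣ α < κ⟩, with the single relation <_T, forms a κ-system of width < θ. -/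
open Set Cardinal

/-- A uniform ultrafilter concentrating on the ordinals below `κ`. -/
def OrdUniform (κ : Cardinal.{0}) (U : Ultrafilter Ordinal.{0}) : Prop :=
  Set.Iio κ.ord ∈ U ∧
  ∀ X ∈ U, #(X ∩ Set.Iio κ.ord : Set Ordinal.{0}) = Cardinal.lift.{1} κ

/-- `U` (an ultrafilter on the ordinals below `κ`) is `μ`-decomposable. -/
def OrdDecomposable (κ μ : Cardinal.{0}) (U : Ultrafilter Ordinal.{0}) : Prop :=
  ∃ f : Ordinal.{0} → Ordinal.{0}, (∀ α < κ.ord, f α < μ.ord) ∧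
    ∀ H : Set Ordinal.{0}, H ⊆ Set.Iio μ.ord → #H < Cardinal.lift.{1} μ →
      {α | α < κ.ord ∧ f α ∈ H} ∉ U

/-- Suppose `κ` is regular uncountable, `U` is a uniform ultrafilter over `κ` that is
`μ`-indecomposable for all cardinals `μ ∈ [θ,κ)` (`θ` uncountable, `θ⁺ < κ`), `T` is
a `κ`-tree with transversal `t`, and `S α ⊆ T_α` with `|S α| < θ` and
`X_α = {β ∈ [α,κ) | t_β ↾ α ∈ S α} ∈ U`.  Then for every `α < β < κ` there are
`s ∈ S α` and `u ∈ S β` with `s <_T u`. -/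
theorem stmt15 (κ θ : Cardinal.{0}) (hκ : κ.IsRegular) (hκunc : aleph0 < κ)
    (hθ : aleph0 < θ) (hθκ : Order.succ θ < κ)
    (U : Ultrafilter Ordinal.{0}) (hU : OrdUniform κ U)
    (hind : ∀ μ : Cardinal.{0}, θ ≤ μ → μ < κ → ¬ OrdDecomposable κ μ U)
    (T : OrdTree) (hT : T.IsOfHeight κ.ord) (hlev : T.SmallLevels κ.ord κ)
    (t : Ordinal.{0} → T.carrier) (ht : ∀ α < κ.ord, T.level (t α) = α)
    (S : Ordinal.{0} → Set T.carrier)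
    (hS : ∀ α, α < κ.ord → (∀ s ∈ S α, T.level s = α) ∧ #(S α) < θ ∧
      {β | α ≤ β ∧ β < κ.ord ∧ ∃ s ∈ S α, (s = t β ∨ T.lt s (t β))} ∈ U) :
    ∀ α β, α < β → β < κ.ord →
      ∃ s ∈ S α, ∃ u ∈ S β, T.lt s u := by
  intro α β hαβ hβ
  have hα : α < κ.ord := hαβ.trans hβ
  obtain ⟨hSα1, -, hSα3⟩ := hS α hα
  obtain ⟨hSβ1, -, hSβ3⟩ := hS β hβ
  obtain ⟨γ, ⟨hαγ, hγκ, s, hsS, hs⟩, hβγ, -, u, huS, hu⟩ :=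
    Filter.nonempty_of_mem (Filter.inter_mem hSα3 hSβ3)
  obtain ⟨-, -, hlt, -, hlin, -, -⟩ := hT
  have hsl : T.level s = α := hSα1 s hsS
  have hul : T.level u = β := hSβ1 u huS
  have htγ : T.level (t γ) = γ := ht γ hγκ
  have hsγ : T.lt s (t γ) := by
    rcases hs with rfl | h
    · exact absurd (hsl.symm.trans htγ) (hαβ.trans_le hβγ).ne
    · exact h
  rcases hu with rfl | h
  · exact ⟨s, hsS, t γ, huS, hsγ⟩
  · rcases hlin s u (t γ) hsγ h with rfl | h' | h'
    · exact absurd (hsl.symm.trans hul) hαβ.ne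
    · exact ⟨s, hsS, u, huS, h'⟩
    · exact absurd (hsl ▸ hul ▸ hlt u s h') hαβ.asymm
end

section
/- A tree T of height λ, where cf(λ) > ℵ₁, all of whose levels are countable, has at most ℵ₀ many cofinal branches. -/
open Set Cardinal

/-!
Two distinct cofinal branches share no node above some level below `lam`: a node lying in one
branch but not the other bounds the levels of their common nodes, because the common nodes are
closed downwards. Given `ℵ₁` branches, the `ℵ₁` splitting levels of their pairs are bounded below
`lam` since `cf(lam) > ℵ₁`, so at that bound the branches pass through pairwise distinct nodes of
a single countable level.
-/

namespace OrdTree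

variable {T : OrdTree} {lam : Ordinal.{0}}

theorem IsOfHeight.level_lt_level (hT : T.IsOfHeight lam) {x y : T.carrier} (h : T.lt x y) :
    T.level x < T.level y :=
  hT.2.2.1 x y h

theorem IsOfHeight.existsUnique_lt_of_lt_level (hT : T.IsOfHeight lam) (y : T.carrier)
    {α : Ordinal} (hα : α < T.level y) : ∃! x, T.lt x y ∧ T.level x = α :=
  hT.2.2.2.1 y α hα

theorem IsOfHeight.level_lt (hT : T.IsOfHeight lam) (x : T.carrier) : T.level x < lam :=
  hT.2.2.2.2.2.1 x

def IsChain (T : OrdTree) (B : Set T.carrier) : Prop :=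
  ∀ x ∈ B, ∀ y ∈ B, x = y ∨ T.lt x y ∨ T.lt y x

def IsCofinalBranch (T : OrdTree) (lam : Ordinal.{0}) (B : Set T.carrier) : Prop :=
  T.IsChain B ∧ ∀ α < lam, ∃ x ∈ B, T.level x = α

section Chain

variable {B B' : Set T.carrier} {x y z : T.carrier}

theorem IsChain.eq_of_level_eq (hT : T.IsOfHeight lam) (hB : T.IsChain B) (hx : x ∈ B)
    (hy : y ∈ B) (h : T.level x = T.level y) : x = y := by
  rcases hB x hx y hy with hxy | hxy | hxy
  · exact hxy
  · exact absurd h (hT.level_lt_level hxy).ne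
  · exact absurd h (hT.level_lt_level hxy).ne'

theorem IsChain.lt_of_level_lt (hT : T.IsOfHeight lam) (hB : T.IsChain B) (hx : x ∈ B)
    (hy : y ∈ B) (h : T.level x < T.level y) : T.lt x y := by
  rcases hB x hx y hy with hxy | hxy | hxy
  · exact absurd h (hxy ▸ lt_irrefl _)
  · exact hxy
  · exact absurd h (hT.level_lt_level hxy).not_gt

theorem IsChain.eq_of_level_eq_of_le (hT : T.IsOfHeight lam) (hB : T.IsChain B)
    (hB' : T.IsChain B') (hxB : x ∈ B) (hxB' : x ∈ B') (hy : y ∈ B) (hz : z ∈ B')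
    (hyz : T.level y = T.level z) (hyx : T.level y ≤ T.level x) : y = z := by
  rcases hyx.lt_or_eq with hlt | heq
  · obtain ⟨w, -, hw⟩ := hT.existsUnique_lt_of_lt_level x hlt
    have hzx : T.level z < T.level x := hyz ▸ hlt
    exact (hw y ⟨hB.lt_of_level_lt hT hy hxB hlt, rfl⟩).trans
      (hw z ⟨hB'.lt_of_level_lt hT hz hxB' hzx, hyz.symm⟩).symm
  · exact (hB.eq_of_level_eq hT hy hxB heq).trans
      (hB'.eq_of_level_eq hT hxB' hz (heq.symm.trans hyz))

theorem IsCofinalBranch.level_lt_of_mem_symmDiff (hT : T.IsOfHeight lam)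
    (hB : T.IsCofinalBranch lam B) (hB' : T.IsCofinalBranch lam B') (hx : x ∈ B ∩ B')
    (hy : y ∈ symmDiff B B') : T.level x < T.level y := by
  wlog hyB : y ∈ B ∧ y ∉ B' generalizing B B'
  · exact this hB' hB ⟨hx.2, hx.1⟩ (symmDiff_comm B B' ▸ hy)
      ((mem_symmDiff.1 hy).resolve_left hyB)
  by_contra! hyx
  obtain ⟨z, hzB', hz⟩ := hB'.2 (T.level y) (hT.level_lt y)
  exact hyB.2 (hB.1.eq_of_level_eq_of_le hT hB'.1 hx.1 hx.2 hyB.1 hzB' hz.symm hyx ▸ hzB')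

end Chain

theorem exists_level_forall_eq_of_mem_of_mem (hT : T.IsOfHeight lam) (hcof : ℵ₀ ≤ lam.cof)
    {F : Set (Set T.carrier)} (hF : ∀ B ∈ F, T.IsCofinalBranch lam B) (hFcard : #F < lam.cof) :
    ∃ α < lam, ∀ B ∈ F, ∀ B' ∈ F, ∀ x ∈ B ∩ B', T.level x = α → B = B' := by
  have hsplit (p : {p : F × F // p.1 ≠ p.2}) : (symmDiff p.1.1.1 p.1.2.1).Nonempty :=
    symmDiff_nonempty.2 fun h => p.2 (Subtype.ext h)
  choose y hy using hsplit
  have hpairs : #{p : F × F // p.1 ≠ p.2} < lam.cof :=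
    (mk_subtype_le _).trans_lt (by simpa using mul_lt_of_lt hcof hFcard hFcard)
  refine ⟨⨆ p, T.level (y p), Ordinal.iSup_lt_of_lt_cof hpairs fun p => hT.level_lt _, ?_⟩
  intro B hB B' hB' x hx hxα
  by_contra hne
  let p : {p : F × F // p.1 ≠ p.2} := ⟨(⟨B, hB⟩, ⟨B', hB'⟩), fun h => hne (congrArg (·.1) h)⟩
  have hlt := (hF B hB).level_lt_of_mem_symmDiff hT (hF B' hB') hx (hy p)
  exact (hxα ▸ hlt).not_ge (Ordinal.le_iSup (fun p => T.level (y p)) p)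

theorem mk_le_mk_level_of_forall_eq_of_mem_of_mem {F : Set (Set T.carrier)}
    (hF : ∀ B ∈ F, T.IsCofinalBranch lam B) {α : Ordinal} (hα : α < lam)
    (hsep : ∀ B ∈ F, ∀ B' ∈ F, ∀ x ∈ B ∩ B', T.level x = α → B = B') :
    #F ≤ #{x : T.carrier | T.level x = α} := by
  have hnode (B : F) : ∃ x ∈ B.1, T.level x = α := (hF B B.2).2 α hα
  choose node hnode_mem hnode_level using hnode
  refine mk_le_of_injective (f := fun B => ⟨node B, hnode_level B⟩) fun B B' h => ?_
  have hnode_eq : node B = node B' := congrArg Subtype.val h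
  exact Subtype.ext (hsep B B.2 B' B'.2 (node B)
    ⟨hnode_mem B, hnode_eq ▸ hnode_mem B'⟩ (hnode_level B))

end OrdTree

/-- A tree of height `lam` with `cf(lam) > ℵ₁` all of whose levels are countable has
at most countably many cofinal branches (chains meeting every level). -/
theorem stmt17 (lam : Ordinal.{0}) (hcof : Cardinal.aleph 1 < lam.cof)
    (T : OrdTree) (hT : T.IsOfHeight lam)
    (hcount : ∀ α < lam, {x : T.carrier | T.level x = α}.Countable) :
    {B : Set T.carrier |
      (∀ x ∈ B, ∀ y ∈ B, x = y ∨ T.lt x y ∨ T.lt y x) ∧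
      ∀ α < lam, ∃ x ∈ B, T.level x = α}.Countable := by
  change {B | T.IsCofinalBranch lam B}.Countable
  rw [← le_aleph0_iff_set_countable]
  by_contra! hS
  obtain ⟨F, hFS, hF⟩ := le_mk_iff_exists_subset.1 (Order.succ_le_of_lt hS)
  rw [succ_aleph0] at hF
  obtain ⟨α, hα, hsep⟩ := OrdTree.exists_level_forall_eq_of_mem_of_mem hT
    ((aleph0_le_aleph 1).trans hcof.le) hFS (hF ▸ hcof)
  have hle := (OrdTree.mk_le_mk_level_of_forall_eq_of_mem_of_mem hFS hα hsep).trans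
    (le_aleph0_iff_set_countable.2 (hcount α hα))
  exact aleph0_lt_aleph_one.not_ge (hF ▸ hle)
end
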